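/- arXiv:2501.00653 — 9 statements merged into one kernel-verified Lean document; each statement's English description precedes it below -/
import Mathlib

section
/- Let n ≥ 2 and 1 ≤ k ≤ n−1. Let K ⊆ ℝⁿ be a convex body with K ⊆ Bⁿ such that there exists a John decomposition u¹,…,uᵐ, λ₁,…,λₘ with every uᵢ ∈ K (i.e., Bⁿ is the Loewner ellipsoid of K). Let v¹,…,vᵏ ∈ ℝⁿ be orthonormal, let F be their linear span, let c ∈ F and α₁,…,α_k > 0, and let E be the k-ellipsoid with axis directions v¹,…,vᵏ, center c and semi-axes α₁,…,α_k. If the orthogonal projection of K onto F is contained in E, then ∏ⱼ αⱼ ≥ (k/n)^{k/2} (equivalently vol_k(E) ≥ vol_k(√(k/n)·Bᵏ)), with equality if and only if c = 0 and αⱼ = √(k/n) for every j ∈ {1,…,k} (i.e., E = √(k/n)·(Bⁿ ∩ F), the √(k/n)-dilate of the projection of Bⁿ onto F). -/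
/-!
Every contact point `uᵢ` lies in `K`, so its projection lies in `E`. Averaging these constraints
with the John weights, and using `∑ λᵢ ⟨uᵢ, x⟩² = ‖x‖²`, `∑ λᵢ ⟨uᵢ, x⟩ = 0` and `∑ λᵢ = n`, gives
`∑ⱼ (1 + n ⟨vⱼ, c⟩²) / αⱼ² ≤ n`. AM-GM applied to the `αⱼ⁻²` then yields `∏ αⱼ² ≥ (k/n)ᵏ`;
equality in AM-GM forces all `αⱼ` equal and `∑ⱼ αⱼ⁻² = n`, which leaves no room for `c ≠ 0`.
-/

open scoped InnerProductSpace BigOperators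

open Finset

namespace Real

variable {ι : Type*} {s : Finset ι}

lemma prod_le_sum_div_card_pow {z : ι → ℝ} (hz : ∀ i ∈ s, 0 ≤ z i) :
    ∏ i ∈ s, z i ≤ ((∑ i ∈ s, z i) / #s) ^ #s := by
  obtain rfl | hs := s.eq_empty_or_nonempty
  · simp
  have hcard : (#s : ℝ) ≠ 0 := by exact_mod_cast hs.card_pos.ne'
  have amgm := geom_mean_le_arith_mean_weighted s (fun _ ↦ (#s : ℝ)⁻¹) z
    (fun _ _ ↦ by positivity) (by simp [hcard]) hz
  rw [finsetProd_rpow s z hz, ← mul_sum, inv_mul_eq_div] at amgm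
  calc ∏ i ∈ s, z i = ((∏ i ∈ s, z i) ^ ((#s : ℝ)⁻¹)) ^ #s :=
        (rpow_inv_natCast_pow (prod_nonneg hz) hs.card_pos.ne').symm
    _ ≤ ((∑ i ∈ s, z i) / #s) ^ #s := by gcongr; exact rpow_nonneg (prod_nonneg hz) _

lemma prod_eq_sum_div_card_pow_iff (hs : s.Nonempty) {z : ι → ℝ} (hz : ∀ i ∈ s, 0 ≤ z i) :
    ∏ i ∈ s, z i = ((∑ i ∈ s, z i) / #s) ^ #s ↔ ∀ j ∈ s, z j = (∑ i ∈ s, z i) / #s := by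
  have hcard : (#s : ℝ) ≠ 0 := by exact_mod_cast hs.card_pos.ne'
  have amgm := geom_mean_eq_arith_mean_weighted_iff_of_pos' s (fun _ ↦ (#s : ℝ)⁻¹) z
    (fun _ _ ↦ by positivity) (by simp [hcard]) hz
  rwa [finsetProd_rpow s z hz, ← mul_sum, inv_mul_eq_div, rpow_inv_eq (prod_nonneg hz)
    (div_nonneg (sum_nonneg hz) (Nat.cast_nonneg _)) hcard, rpow_natCast] at amgm

lemma card_div_pow_le_prod_of_sum_inv_le {a : ι → ℝ} (ha : ∀ i ∈ s, 0 < a i) {N : ℝ}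
    (h : ∑ i ∈ s, (a i)⁻¹ ≤ N) : (#s / N) ^ #s ≤ ∏ i ∈ s, a i := by
  have hinv : ∀ i ∈ s, 0 ≤ (a i)⁻¹ := fun i hi ↦ (inv_pos.2 (ha i hi)).le
  have hprod : ∏ i ∈ s, (a i)⁻¹ ≤ (N / #s) ^ #s :=
    (prod_le_sum_div_card_pow hinv).trans
      (by gcongr; exact div_nonneg (sum_nonneg hinv) (Nat.cast_nonneg _))
  rw [prod_inv_distrib] at hprod
  have := inv_anti₀ (inv_pos.2 (prod_pos ha)) hprod
  rwa [inv_inv, ← inv_pow, inv_div] at this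

lemma sum_inv_eq_and_eq_card_div_of_prod_eq (hs : s.Nonempty) {a : ι → ℝ}
    (ha : ∀ i ∈ s, 0 < a i) {N : ℝ} (h : ∑ i ∈ s, (a i)⁻¹ ≤ N)
    (heq : ∏ i ∈ s, a i = (#s / N) ^ #s) :
    ∑ i ∈ s, (a i)⁻¹ = N ∧ ∀ i ∈ s, a i = #s / N := by
  have hinv : ∀ i ∈ s, 0 ≤ (a i)⁻¹ := fun i hi ↦ (inv_pos.2 (ha i hi)).le
  have hcard : (0 : ℝ) < #s := by exact_mod_cast hs.card_pos
  have hmean : 0 ≤ (∑ i ∈ s, (a i)⁻¹) / #s := div_nonneg (sum_nonneg hinv) hcard.le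
  have hprod : ∏ i ∈ s, (a i)⁻¹ = (N / #s) ^ #s := by
    rw [prod_inv_distrib, heq, ← inv_pow, inv_div]
  have hmean_le : ((∑ i ∈ s, (a i)⁻¹) / #s) ^ #s ≤ (N / #s) ^ #s := by gcongr
  have hmean_eq : (∑ i ∈ s, (a i)⁻¹) / #s = N / #s :=
    (pow_left_inj₀ hmean (hmean.trans (by gcongr)) hs.card_pos.ne').1
      (le_antisymm hmean_le (hprod ▸ prod_le_sum_div_card_pow hinv))
  have hsum : ∑ i ∈ s, (a i)⁻¹ = N := by
    rwa [div_left_inj' hcard.ne'] at hmean_eq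
  refine ⟨hsum, fun i hi ↦ ?_⟩
  have := (prod_eq_sum_div_card_pow_iff hs hinv).1 (by rw [hprod, hmean_eq]) i hi
  rw [hmean_eq] at this
  rw [← inv_div, ← this, inv_inv]

lemma sqrt_card_div_pow_le_prod_of_sum_inv_sq_le {α : ι → ℝ} (hα : ∀ i ∈ s, 0 < α i) {N : ℝ}
    (h : ∑ i ∈ s, (α i ^ 2)⁻¹ ≤ N) : √(#s / N) ^ #s ≤ ∏ i ∈ s, α i := by
  have hα2 : ∀ i ∈ s, 0 < α i ^ 2 := fun i hi ↦ pow_pos (hα i hi) 2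
  have hN : 0 ≤ N := (sum_nonneg fun i hi ↦ (inv_pos.2 (hα2 i hi)).le).trans h
  rw [← pow_le_pow_iff_left₀ (by positivity) (prod_pos hα).le two_ne_zero, ← pow_mul, mul_comm,
    pow_mul, sq_sqrt (by positivity), ← prod_pow]
  exact card_div_pow_le_prod_of_sum_inv_le hα2 h

lemma sum_inv_sq_eq_and_eq_sqrt_card_div_of_prod_eq (hs : s.Nonempty) {α : ι → ℝ}
    (hα : ∀ i ∈ s, 0 < α i) {N : ℝ} (h : ∑ i ∈ s, (α i ^ 2)⁻¹ ≤ N)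
    (heq : ∏ i ∈ s, α i = √(#s / N) ^ #s) :
    ∑ i ∈ s, (α i ^ 2)⁻¹ = N ∧ ∀ i ∈ s, α i = √(#s / N) := by
  have hα2 : ∀ i ∈ s, 0 < α i ^ 2 := fun i hi ↦ pow_pos (hα i hi) 2
  have hN : 0 ≤ N := (sum_nonneg fun i hi ↦ (inv_pos.2 (hα2 i hi)).le).trans h
  obtain ⟨hsum, hα_eq⟩ := sum_inv_eq_and_eq_card_div_of_prod_eq hs hα2 h (by
    rw [prod_pow, heq, ← pow_mul, mul_comm, pow_mul, sq_sqrt (by positivity)])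
  exact ⟨hsum, fun i hi ↦ by rw [← hα_eq i hi, sqrt_sq (hα i hi).le]⟩

end Real

section JohnDecomposition

variable {E : Type*} [NormedAddCommGroup E] [InnerProductSpace ℝ E]
  {ι : Type*} [Fintype ι] {u : ι → E} {lam : ι → ℝ}

lemma sum_mul_inner_mul_inner_eq_inner (hdecomp : ∀ x, ∑ i, (lam i * ⟪u i, x⟫_ℝ) • u i = x)
    (x y : E) : ∑ i, lam i * (⟪u i, x⟫_ℝ * ⟪u i, y⟫_ℝ) = ⟪x, y⟫_ℝ := by
  conv_rhs => rw [← hdecomp x]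
  simp only [sum_inner, real_inner_smul_left, mul_assoc]

lemma sum_weights_eq_finrank [FiniteDimensional ℝ E] (hu : ∀ i, ‖u i‖ = 1)
    (hdecomp : ∀ x, ∑ i, (lam i * ⟪u i, x⟫_ℝ) • u i = x) :
    ∑ i, lam i = Module.finrank ℝ E := by
  let b := stdOrthonormalBasis ℝ E
  calc ∑ i, lam i = ∑ i, lam i * ∑ l, ⟪u i, b l⟫_ℝ * ⟪b l, u i⟫_ℝ := by
        simp only [b.sum_inner_mul_inner, real_inner_self_eq_norm_sq, hu, one_pow, mul_one]
    _ = ∑ l, ∑ i, lam i * (⟪u i, b l⟫_ℝ * ⟪u i, b l⟫_ℝ) := by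
        simp only [mul_sum, real_inner_comm (u _) (b _)]
        exact sum_comm
    _ = Module.finrank ℝ E := by
        simp [sum_mul_inner_mul_inner_eq_inner hdecomp, b.norm_eq_one]

lemma sum_mul_inner_sub_sq (hsum : ∑ i, lam i • u i = 0)
    (hdecomp : ∀ x, ∑ i, (lam i * ⟪u i, x⟫_ℝ) • u i = x) (x : E) (d : ℝ) :
    ∑ i, lam i * (⟪x, u i⟫_ℝ - d) ^ 2 = ‖x‖ ^ 2 + (∑ i, lam i) * d ^ 2 := by
  have hsq := sum_mul_inner_mul_inner_eq_inner hdecomp x x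
  have hlin : ∑ i, lam i * ⟪x, u i⟫_ℝ = 0 := by
    simpa [inner_sum, real_inner_smul_right] using congrArg (⟪x, ·⟫_ℝ) hsum
  rw [real_inner_self_eq_norm_sq] at hsq
  simp only [real_inner_comm x] at hsq hlin ⊢
  calc ∑ i, lam i * (⟪x, u i⟫_ℝ - d) ^ 2
      = ∑ i, lam i * (⟪x, u i⟫_ℝ * ⟪x, u i⟫_ℝ) - 2 * d * ∑ i, lam i * ⟪x, u i⟫_ℝ
          + (∑ i, lam i) * d ^ 2 := by
        simp only [mul_sum, sum_mul, ← sum_sub_distrib, ← sum_add_distrib]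
        exact sum_congr rfl fun i _ ↦ by ring
    _ = ‖x‖ ^ 2 + (∑ i, lam i) * d ^ 2 := by rw [hsq, hlin]; ring

lemma sum_inv_sq_add_mul_sum_sq_div_sq_le (hlam : ∀ i, 0 ≤ lam i) (hsum : ∑ i, lam i • u i = 0)
    (hdecomp : ∀ x, ∑ i, (lam i * ⟪u i, x⟫_ℝ) • u i = x)
    {κ : Type*} [Fintype κ] {v : κ → E} (hv : ∀ j, ‖v j‖ = 1) {α d : κ → ℝ}
    (hcon : ∀ i, ∑ j, (⟪v j, u i⟫_ℝ - d j) ^ 2 / α j ^ 2 ≤ 1) :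
    ∑ j, (α j ^ 2)⁻¹ + (∑ i, lam i) * ∑ j, d j ^ 2 / α j ^ 2 ≤ ∑ i, lam i := by
  calc ∑ j, (α j ^ 2)⁻¹ + (∑ i, lam i) * ∑ j, d j ^ 2 / α j ^ 2
      = ∑ j, (∑ i, lam i * (⟪v j, u i⟫_ℝ - d j) ^ 2) / α j ^ 2 := by
        simp only [sum_mul_inner_sub_sq hsum hdecomp, hv, one_pow, mul_sum, ← sum_add_distrib]
        exact sum_congr rfl fun j _ ↦ by ring
    _ = ∑ i, lam i * ∑ j, (⟪v j, u i⟫_ℝ - d j) ^ 2 / α j ^ 2 := by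
        simp only [sum_div, mul_sum, mul_div_assoc]
        exact sum_comm
    _ ≤ ∑ i, lam i * 1 := by gcongr with i; exacts [hlam i, hcon i]
    _ = ∑ i, lam i := by simp

end JohnDecomposition

section Projection

variable {E : Type*} [NormedAddCommGroup E] [InnerProductSpace ℝ E]
  {κ : Type*} [Fintype κ] {v : κ → E}

lemma Orthonormal.coeff_eq_inner_sub_inner (hv : Orthonormal ℝ v) {x c : E} {t : κ → ℝ}
    (h : ∑ j, ⟪v j, x⟫_ℝ • v j = c + ∑ j, t j • v j) (j : κ) :
    t j = ⟪v j, x⟫_ℝ - ⟪v j, c⟫_ℝ := by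
  have := congrArg (⟪v j, ·⟫_ℝ) h
  simp only [inner_add_right, hv.inner_right_fintype] at this
  linarith

lemma eq_zero_of_mem_span_range_of_inner_eq_zero {c : E}
    (hc : c ∈ Submodule.span ℝ (Set.range v)) (h : ∀ j, ⟪v j, c⟫_ℝ = 0) : c = 0 := by
  obtain ⟨f, hf⟩ := (Submodule.mem_span_range_iff_exists_fun ℝ).1 hc
  rw [← inner_self_eq_zero (𝕜 := ℝ)]
  nth_rewrite 1 [← hf]
  simp only [sum_inner, real_inner_smul_left, h, mul_zero, sum_const_zero]

end Projection

theorem stmt0_general (n k : ℕ) (hk : 1 ≤ k)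
    (K : Set (EuclideanSpace ℝ (Fin n)))
    (m : ℕ) (u : Fin m → EuclideanSpace ℝ (Fin n)) (lam : Fin m → ℝ)
    (hu : ∀ i, ‖u i‖ = 1) (hlam : ∀ i, 0 < lam i)
    (huK : ∀ i, u i ∈ K)
    (hsum : ∑ i, lam i • u i = 0)
    (hdecomp : ∀ x : EuclideanSpace ℝ (Fin n), ∑ i, (lam i * ⟪u i, x⟫_ℝ) • u i = x)
    (v : Fin k → EuclideanSpace ℝ (Fin n)) (hv : Orthonormal ℝ v)
    (c : EuclideanSpace ℝ (Fin n)) (hc : c ∈ Submodule.span ℝ (Set.range v))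
    (α : Fin k → ℝ) (hα : ∀ j, 0 < α j)
    (Eell : Set (EuclideanSpace ℝ (Fin n)))
    (hEell : Eell = {x | ∃ t : Fin k → ℝ,
      ∑ j, (t j) ^ 2 / (α j) ^ 2 ≤ 1 ∧ x = c + ∑ j, t j • v j})
    (hproj : ∀ x ∈ K, (∑ j, ⟪v j, x⟫_ℝ • v j) ∈ Eell) :
    Real.sqrt ((k : ℝ) / n) ^ k ≤ ∏ j, α j ∧
      ((∏ j, α j = Real.sqrt ((k : ℝ) / n) ^ k) ↔
        (c = 0 ∧ ∀ j, α j = Real.sqrt ((k : ℝ) / n))) := by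
  have htrace : ∑ i, lam i = n := by
    rw [sum_weights_eq_finrank hu hdecomp, finrank_euclideanSpace_fin]
  have hcon : ∀ i, ∑ j, (⟪v j, u i⟫_ℝ - ⟪v j, c⟫_ℝ) ^ 2 / α j ^ 2 ≤ 1 := by
    intro i
    obtain ⟨t, ht, hproj_eq⟩ := hEell ▸ hproj (u i) (huK i)
    simpa only [hv.coeff_eq_inner_sub_inner hproj_eq] using ht
  have hmain := sum_inv_sq_add_mul_sum_sq_div_sq_le (fun i ↦ (hlam i).le) hsum hdecomp
    hv.norm_eq_one hcon
  rw [htrace] at hmain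
  set D := ∑ j, ⟪v j, c⟫_ℝ ^ 2 / α j ^ 2
  have hD : 0 ≤ D := by positivity
  have hbound : ∑ j, (α j ^ 2)⁻¹ ≤ n := by linarith [mul_nonneg (Nat.cast_nonneg n) hD]
  have hαpos : ∀ j ∈ univ, 0 < α j := fun j _ ↦ hα j
  have hlow := Real.sqrt_card_div_pow_le_prod_of_sum_inv_sq_le hαpos hbound
  rw [card_fin] at hlow
  refine ⟨hlow, fun heq ↦ ?_, fun ⟨_, hα_eq⟩ ↦ ?_⟩
  · have hne : (univ : Finset (Fin k)).Nonempty := univ_nonempty_iff.2 ⟨⟨0, hk⟩⟩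
    obtain ⟨hsum_eq, hα_eq⟩ := Real.sum_inv_sq_eq_and_eq_sqrt_card_div_of_prod_eq hne hαpos
      hbound (by rw [heq, card_fin])
    have hn0 : (0 : ℝ) < n := hsum_eq ▸ sum_pos (fun j _ ↦ by have := hα j; positivity) hne
    have hD0 : D = 0 := le_antisymm (by nlinarith) hD
    have hd : ∀ j, ⟪v j, c⟫_ℝ = 0 := fun j ↦ by
      simpa [(hα j).ne'] using (sum_eq_zero_iff_of_nonneg (fun j _ ↦ by positivity)).1 hD0 j
        (mem_univ j)
    exact ⟨eq_zero_of_mem_span_range_of_inner_eq_zero hc hd, by simpa using hα_eq⟩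
  · rw [prod_congr rfl fun j _ ↦ hα_eq j, prod_const, card_fin]

/-- minimal-volume lower bound for ellipsoids containing the projection
of a convex body whose Loewner ellipsoid is the unit ball, with equality case. -/
theorem stmt0 (n k : ℕ) (hn : 2 ≤ n) (hk : 1 ≤ k) (hkn : k ≤ n - 1)
    (K : Set (EuclideanSpace ℝ (Fin n)))
    (hKcompact : IsCompact K) (hKconv : Convex ℝ K) (hKint : (interior K).Nonempty)
    (hKB : K ⊆ Metric.closedBall 0 1)
    (m : ℕ) (u : Fin m → EuclideanSpace ℝ (Fin n)) (lam : Fin m → ℝ)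
    (hu : ∀ i, ‖u i‖ = 1) (hlam : ∀ i, 0 < lam i)
    (huK : ∀ i, u i ∈ K)
    (hsum : ∑ i, lam i • u i = 0)
    (hdecomp : ∀ x : EuclideanSpace ℝ (Fin n), ∑ i, (lam i * ⟪u i, x⟫_ℝ) • u i = x)
    (v : Fin k → EuclideanSpace ℝ (Fin n)) (hv : Orthonormal ℝ v)
    (c : EuclideanSpace ℝ (Fin n)) (hc : c ∈ Submodule.span ℝ (Set.range v))
    (α : Fin k → ℝ) (hα : ∀ j, 0 < α j)
    (Eell : Set (EuclideanSpace ℝ (Fin n)))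
    (hEell : Eell = {x | ∃ t : Fin k → ℝ,
      ∑ j, (t j) ^ 2 / (α j) ^ 2 ≤ 1 ∧ x = c + ∑ j, t j • v j})
    (hproj : ∀ x ∈ K, (∑ j, ⟪v j, x⟫_ℝ • v j) ∈ Eell) :
    Real.sqrt ((k : ℝ) / n) ^ k ≤ ∏ j, α j ∧
      ((∏ j, α j = Real.sqrt ((k : ℝ) / n) ^ k) ↔
        (c = 0 ∧ ∀ j, α j = Real.sqrt ((k : ℝ) / n))) :=
  stmt0_general n k hk K m u lam hu hlam huK hsum hdecomp v hv c hc α hα Eell hEell hproj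
end

section
/- Let x¹,…,xᵐ ∈ ℝⁿ satisfy ∑ᵢ xᵢ = 0 and let u¹,…,uᵐ ∈ ℝⁿ be unit vectors. Set γ := ∑_{i,ℓ} ‖xᵢ‖·‖x_ℓ‖·(1 − ⟨uᵢ,u_ℓ⟩). Then (∑ᵢ ⟨xᵢ,uᵢ⟩)² ≤ γ. Moreover, if ξ := ∑ᵢ ‖xᵢ‖ > 0 and u := (1/ξ)·∑ᵢ ‖xᵢ‖·uᵢ, then equality holds if and only if there exists σ ∈ {−1,1} such that for every i either xᵢ = 0 or ξ·‖xᵢ‖·(uᵢ − u) = σ·√γ·xᵢ. -/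
open scoped InnerProductSpace BigOperators

/-- Ball's lemma with its equality case. -/
theorem stmt3 (n m : ℕ)
    (x u : Fin m → EuclideanSpace ℝ (Fin n))
    (hx : ∑ i, x i = 0) (hu : ∀ i, ‖u i‖ = 1)
    (γ : ℝ) (hγ : γ = ∑ i, ∑ l, ‖x i‖ * ‖x l‖ * (1 - ⟪u i, u l⟫_ℝ)) :
    (∑ i, ⟪x i, u i⟫_ℝ) ^ 2 ≤ γ ∧
    ∀ ξ : ℝ, ξ = ∑ i, ‖x i‖ → 0 < ξ →
      ∀ w : EuclideanSpace ℝ (Fin n), w = ξ⁻¹ • ∑ i, ‖x i‖ • u i →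
        ((∑ i, ⟪x i, u i⟫_ℝ) ^ 2 = γ ↔
          ∃ σ : ℝ, (σ = 1 ∨ σ = -1) ∧
            ∀ i, x i = 0 ∨ (ξ * ‖x i‖) • (u i - w) = (σ * Real.sqrt γ) • x i) := by
  classical
  set S : ℝ := ∑ i, ⟪x i, u i⟫_ℝ with hSdef
  -- inner product of x's with any fixed vector sums to zero
  have hzero : ∀ w : EuclideanSpace ℝ (Fin n), ∑ i, ⟪x i, w⟫_ℝ = 0 := by
    intro w
    rw [← sum_inner, hx, inner_zero_left]
  -- S as a sum against u i - w
  have hA : ∀ w : EuclideanSpace ℝ (Fin n), ∑ i, ⟪x i, u i - w⟫_ℝ = S := by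
    intro w
    simp only [inner_sub_right, Finset.sum_sub_distrib, hzero, sub_zero, hSdef]
  -- the key identity
  have key : ∀ ξ : ℝ, ξ = ∑ i, ‖x i‖ → 0 < ξ →
      ∀ w : EuclideanSpace ℝ (Fin n), w = ξ⁻¹ • ∑ i, ‖x i‖ • u i →
      ∀ t : ℝ,
        (∑ i, (ξ * ‖x i‖ * ‖u i - w‖ ^ 2 - 2 * t * ⟪x i, u i - w⟫_ℝ
            + t ^ 2 * ‖x i‖ / ξ))
          = γ - 2 * t * S + t ^ 2 := by
    intro ξ hξ hξ0 w hw t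
    have hξne : ξ ≠ 0 := ne_of_gt hξ0
    have hwsum : ξ • w = ∑ i, ‖x i‖ • u i := by
      rw [hw, smul_smul, mul_inv_cancel₀ hξne, one_smul]
    have hw2 : ∑ i, ‖x i‖ * ⟪u i, w⟫_ℝ = ξ * ‖w‖ ^ 2 := by
      have : ∑ i, ‖x i‖ * ⟪u i, w⟫_ℝ = ⟪∑ i, ‖x i‖ • u i, w⟫_ℝ := by
        rw [sum_inner]
        exact Finset.sum_congr rfl fun i _ => (real_inner_smul_left _ _ _).symm
      rw [this, ← hwsum, real_inner_smul_left, real_inner_self_eq_norm_sq]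
    have hγ' : γ = ξ ^ 2 - ξ ^ 2 * ‖w‖ ^ 2 := by
      have h1 : ∑ i, ∑ l, ‖x i‖ * ‖x l‖ = ξ ^ 2 := by
        rw [← Finset.sum_mul_sum]
        rw [hξ]; ring
      have h2 : ∑ i, ∑ l, ‖x i‖ * ‖x l‖ * ⟪u i, u l⟫_ℝ = ξ ^ 2 * ‖w‖ ^ 2 := by
        have : ∑ i, ∑ l, ‖x i‖ * ‖x l‖ * ⟪u i, u l⟫_ℝ
            = ⟪∑ i, ‖x i‖ • u i, ∑ l, ‖x l‖ • u l⟫_ℝ := by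
          rw [sum_inner]
          refine Finset.sum_congr rfl fun i _ => ?_
          rw [inner_sum]
          refine Finset.sum_congr rfl fun l _ => ?_
          rw [real_inner_smul_left, real_inner_smul_right]; ring
        rw [this, ← hwsum, real_inner_smul_left, real_inner_smul_right,
          real_inner_self_eq_norm_sq]
        ring
      calc γ = ∑ i, ∑ l, (‖x i‖ * ‖x l‖ - ‖x i‖ * ‖x l‖ * ⟪u i, u l⟫_ℝ) := by
              rw [hγ]; refine Finset.sum_congr rfl fun i _ => ?_
              refine Finset.sum_congr rfl fun l _ => ?_; ring
        _ = ξ ^ 2 - ξ ^ 2 * ‖w‖ ^ 2 := by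
              simp only [Finset.sum_sub_distrib]
              rw [h1, h2]
    have hB : ∑ i, ξ * ‖x i‖ * ‖u i - w‖ ^ 2 = γ := by
      have hexp : ∀ i, ξ * ‖x i‖ * ‖u i - w‖ ^ 2
          = ξ * ‖x i‖ - 2 * ξ * (‖x i‖ * ⟪u i, w⟫_ℝ) + ξ * ‖w‖ ^ 2 * ‖x i‖ := by
        intro i
        rw [norm_sub_sq_real, hu i]
        ring
      rw [Finset.sum_congr rfl fun i _ => hexp i]
      rw [Finset.sum_add_distrib, Finset.sum_sub_distrib, ← Finset.mul_sum,
        ← Finset.mul_sum, ← Finset.mul_sum, hw2, ← hξ, hγ']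
      ring
    -- now combine
    rw [Finset.sum_add_distrib, Finset.sum_sub_distrib, hB]
    have h3 : ∑ i, 2 * t * ⟪x i, u i - w⟫_ℝ = 2 * t * S := by
      rw [← Finset.mul_sum, hA]
    have h4 : ∑ i, t ^ 2 * ‖x i‖ / ξ = t ^ 2 := by
      have : ∑ i, t ^ 2 * ‖x i‖ / ξ = t ^ 2 / ξ * ∑ i, ‖x i‖ := by
        rw [Finset.mul_sum]; refine Finset.sum_congr rfl fun i _ => ?_; ring
      rw [this, ← hξ]; field_simp
    rw [h3, h4]
  -- positivity and the zero case of each term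
  have pos : ∀ ξ : ℝ, 0 < ξ → ∀ w : EuclideanSpace ℝ (Fin n), ∀ t : ℝ, ∀ i,
      0 ≤ ξ * ‖x i‖ * ‖u i - w‖ ^ 2 - 2 * t * ⟪x i, u i - w⟫_ℝ + t ^ 2 * ‖x i‖ / ξ
      ∧ (ξ * ‖x i‖ * ‖u i - w‖ ^ 2 - 2 * t * ⟪x i, u i - w⟫_ℝ + t ^ 2 * ‖x i‖ / ξ = 0 →
          x i = 0 ∨ (ξ * ‖x i‖) • (u i - w) = t • x i) := by
    intro ξ hξ0 w t i
    by_cases hxi : x i = 0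
    · constructor
      · simp [hxi]
      · intro _; exact Or.inl hxi
    · have hni : 0 < ‖x i‖ := norm_pos_iff.mpr hxi
      have ha : 0 < ξ * ‖x i‖ := mul_pos hξ0 hni
      have hr : ‖(ξ * ‖x i‖) • (u i - w) - t • x i‖ ^ 2
          = (ξ * ‖x i‖) ^ 2 * ‖u i - w‖ ^ 2
            - 2 * ((ξ * ‖x i‖) * (t * ⟪x i, u i - w⟫_ℝ)) + t ^ 2 * ‖x i‖ ^ 2 := by
        rw [norm_sub_sq_real, norm_smul, norm_smul, real_inner_smul_left,
          real_inner_smul_right, real_inner_comm (u i - w), Real.norm_eq_abs,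
          Real.norm_eq_abs, abs_of_pos ha, mul_pow |t| ‖x i‖, sq_abs]
        ring
      have hF : ξ * ‖x i‖ * ‖u i - w‖ ^ 2 - 2 * t * ⟪x i, u i - w⟫_ℝ + t ^ 2 * ‖x i‖ / ξ
          = (ξ * ‖x i‖)⁻¹ * ‖(ξ * ‖x i‖) • (u i - w) - t • x i‖ ^ 2 := by
        rw [hr]
        field_simp
      constructor
      · rw [hF]
        positivity
      · intro h0
        rw [hF] at h0
        have : ‖(ξ * ‖x i‖) • (u i - w) - t • x i‖ ^ 2 = 0 := by
          have := mul_eq_zero.mp h0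
          rcases this with h | h
          · exact absurd h (by positivity)
          · exact h
        right
        have := pow_eq_zero_iff (n := 2) (by norm_num) |>.mp this
        rw [norm_eq_zero] at this
        exact sub_eq_zero.mp this
  -- the inequality
  have hineq : S ^ 2 ≤ γ := by
    have hξ0nn : (0:ℝ) ≤ ∑ i, ‖x i‖ := Finset.sum_nonneg fun i _ => norm_nonneg _
    rcases eq_or_lt_of_le hξ0nn with h0 | hpos
    · have hall : ∀ i, x i = 0 := by
        intro i
        have := (Finset.sum_eq_zero_iff_of_nonneg
          (fun i _ => norm_nonneg (x i))).mp h0.symm i (Finset.mem_univ i)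
        exact norm_eq_zero.mp this
      have hS0 : S = 0 := by simp [hSdef, hall]
      have hγ0 : γ = 0 := by simp [hγ, hall]
      simp [hS0, hγ0]
    · have hk := key (∑ i, ‖x i‖) rfl hpos ((∑ i, ‖x i‖)⁻¹ • ∑ i, ‖x i‖ • u i) rfl S
      have hnn : 0 ≤ ∑ i, ((∑ i, ‖x i‖) * ‖x i‖
            * ‖u i - (∑ i, ‖x i‖)⁻¹ • ∑ i, ‖x i‖ • u i‖ ^ 2
          - 2 * S * ⟪x i, u i - (∑ i, ‖x i‖)⁻¹ • ∑ i, ‖x i‖ • u i⟫_ℝ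
          + S ^ 2 * ‖x i‖ / (∑ i, ‖x i‖)) :=
        Finset.sum_nonneg fun i _ =>
          (pos (∑ i, ‖x i‖) hpos ((∑ i, ‖x i‖)⁻¹ • ∑ i, ‖x i‖ • u i) S i).1
      nlinarith [hk, hnn]
  refine ⟨hineq, ?_⟩
  intro ξ hξ hξpos w hw
  have hγnn : 0 ≤ γ := le_trans (sq_nonneg S) hineq
  constructor
  · intro heq
    set σ : ℝ := if 0 ≤ S then 1 else -1 with hσdef
    have hsg : σ * Real.sqrt γ = S := by
      have h1 : Real.sqrt γ = |S| := by rw [← heq, Real.sqrt_sq_eq_abs]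
      rw [h1, hσdef]
      split_ifs with h
      · rw [one_mul, abs_of_nonneg h]
      · rw [neg_one_mul, abs_of_neg (lt_of_not_ge h), neg_neg]
    refine ⟨σ, by rw [hσdef]; split_ifs <;> simp, ?_⟩
    intro i
    have hk := key ξ hξ hξpos w hw S
    have hsum0 : ∑ i, (ξ * ‖x i‖ * ‖u i - w‖ ^ 2 - 2 * S * ⟪x i, u i - w⟫_ℝ
        + S ^ 2 * ‖x i‖ / ξ) = 0 := by
      rw [hk]; nlinarith [heq]
    have hzi := (Finset.sum_eq_zero_iff_of_nonneg
      (fun i _ => (pos ξ hξpos w S i).1)).mp hsum0 i (Finset.mem_univ i)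
    rcases (pos ξ hξpos w S i).2 hzi with h | h
    · exact Or.inl h
    · right; rw [hsg]; exact h
  · rintro ⟨σ, hσ, hcond⟩
    have hσsq : σ ^ 2 = 1 := by rcases hσ with h | h <;> rw [h] <;> norm_num
    have hξne : ξ ≠ 0 := ne_of_gt hξpos
    have hterm : ∀ i, ⟪x i, u i - w⟫_ℝ = σ * Real.sqrt γ * ‖x i‖ / ξ := by
      intro i
      rcases hcond i with h | h
      · simp [h]
      · have hth := congrArg (fun v => ⟪x i, v⟫_ℝ) h
        simp only [real_inner_smul_right, real_inner_self_eq_norm_sq] at hth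
        by_cases hxi : x i = 0
        · simp [hxi]
        · have hni : 0 < ‖x i‖ := norm_pos_iff.mpr hxi
          rw [eq_div_iff hξne]
          refine mul_right_cancel₀ (ne_of_gt hni) ?_
          linear_combination hth
    have hSval : S = σ * Real.sqrt γ := by
      rw [← hA w, Finset.sum_congr rfl fun i _ => hterm i, ← Finset.sum_div,
        ← Finset.mul_sum, ← hξ]
      field_simp
    rw [hSval, mul_pow, hσsq, one_mul, Real.sq_sqrt hγnn]
end

section
/- Let n ≥ 2 and 1 ≤ k ≤ n−1. Let K ⊆ ℝⁿ be a centrally symmetric convex body (K = −K) with Bⁿ ⊆ K admitting a John decomposition u¹,…,uᵐ, λ₁,…,λₘ with ⟨x,uᵢ⟩ ≤ 1 for all x ∈ K and all i (i.e., Bⁿ is the John ellipsoid of K). If E ⊆ K is a k-ellipsoid with orthonormal axis directions v¹,…,vᵏ, center c and semi-axes α₁,…,α_k > 0, then ∏ⱼ αⱼ ≤ (n/k)^{k/2} (equivalently vol_k(E) ≤ vol_k(√(n/k)·Bᵏ)). -/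
/-!
If `u` is a unit vector with `⟪x, u⟫ ≤ 1` on the symmetric body `K`, then the two points of the
ellipsoid `E ⊆ K` extremal in direction `±u` give `⟪c, u⟫ ± (∑ αⱼ² ⟪vⱼ, u⟫²)^{1/2} ≤ 1`,
hence `∑ⱼ αⱼ² ⟪vⱼ, u⟫² ≤ 1`. Weighting these inequalities by the John weights and using
`∑ᵢ λᵢ ⟪uᵢ, vⱼ⟫² = ‖vⱼ‖² = 1` and `∑ᵢ λᵢ = n` (the trace of the identity) yields
`∑ⱼ αⱼ² ≤ n`, and AM-GM turns this into `∏ⱼ αⱼ ≤ (n/k)^{k/2}`.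
-/

open scoped InnerProductSpace BigOperators

open Finset

theorem prod_le_sum_div_card_pow {ι : Type*} [Fintype ι] (z : ι → ℝ) (hz : ∀ i, 0 ≤ z i) :
    ∏ i, z i ≤ ((∑ i, z i) / Fintype.card ι) ^ Fintype.card ι := by
  rcases isEmpty_or_nonempty ι with _ | _
  · simp
  have hcard : (0 : ℝ) < Fintype.card ι := by exact_mod_cast Fintype.card_pos
  have amgm := Real.geom_mean_le_arith_mean univ (fun _ ↦ 1) z (fun _ _ ↦ zero_le_one)
    (by simpa using hcard) (fun i _ ↦ hz i)
  simp only [Real.rpow_one, one_mul, sum_const, card_univ, nsmul_eq_mul, mul_one] at amgm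
  rwa [Real.rpow_inv_le_iff_of_pos (prod_nonneg fun i _ ↦ hz i)
    (div_nonneg (sum_nonneg fun i _ ↦ hz i) hcard.le) hcard, Real.rpow_natCast] at amgm

theorem prod_le_sqrt_div_card_pow_of_sum_sq_le {ι : Type*} [Fintype ι] (a : ι → ℝ) {N : ℝ}
    (h : ∑ i, a i ^ 2 ≤ N) : ∏ i, a i ≤ √(N / Fintype.card ι) ^ Fintype.card ι := by
  have hN : 0 ≤ N / Fintype.card ι :=
    div_nonneg ((sum_nonneg fun i _ ↦ sq_nonneg (a i)).trans h) (Nat.cast_nonneg _)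
  refine le_of_sq_le_sq ?_ (by positivity)
  calc (∏ i, a i) ^ 2 = ∏ i, a i ^ 2 := (prod_pow _ _ _).symm
    _ ≤ ((∑ i, a i ^ 2) / Fintype.card ι) ^ Fintype.card ι :=
        prod_le_sum_div_card_pow _ fun i ↦ sq_nonneg (a i)
    _ ≤ (N / Fintype.card ι) ^ Fintype.card ι := by gcongr
    _ = (√(N / Fintype.card ι) ^ Fintype.card ι) ^ 2 := by
        rw [← pow_mul, mul_comm, pow_mul, Real.sq_sqrt hN]

theorem exists_sum_sq_div_sq_le_one_and_sum_mul_eq_sqrt {ι : Type*} [Fintype ι] (α a : ι → ℝ) :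
    ∃ t : ι → ℝ, ∑ j, t j ^ 2 / α j ^ 2 ≤ 1 ∧ ∑ j, t j * a j = √(∑ j, α j ^ 2 * a j ^ 2) := by
  set S := ∑ j, α j ^ 2 * a j ^ 2
  -- the equality case of Cauchy–Schwarz; `S = 0` is covered by `x / 0 = 0`
  have hS : 0 ≤ S := sum_nonneg fun j _ ↦ by positivity
  refine ⟨fun j ↦ α j ^ 2 * a j / √S, ?_, ?_⟩
  · have hterm : ∀ j, (α j ^ 2 * a j / √S) ^ 2 / α j ^ 2 = α j ^ 2 * a j ^ 2 / S := by
      intro j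
      rcases eq_or_ne (α j) 0 with hα | hα
      · simp [hα]
      · rw [div_pow, Real.sq_sqrt hS]
        field_simp
    simp only [hterm, ← sum_div]
    exact div_self_le_one S
  · simp only [div_mul_eq_mul_div, ← sum_div, mul_assoc, ← sq]
    exact Real.div_sqrt

section Ellipsoid

variable {F : Type*} [NormedAddCommGroup F] [InnerProductSpace ℝ F] {ι : Type*} [Fintype ι]

-- With `x / 0 = 0`, a zero semi-axis `α j` leaves `t j` unconstrained.
def ellipsoid (c : F) (v : ι → F) (α : ι → ℝ) : Set F :=
  {x | ∃ t : ι → ℝ, ∑ j, t j ^ 2 / α j ^ 2 ≤ 1 ∧ x = c + ∑ j, t j • v j}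

theorem neg_ellipsoid (c : F) (v : ι → F) (α : ι → ℝ) :
    -ellipsoid c v α = ellipsoid (-c) v α := by
  ext x
  constructor
  · rintro ⟨t, ht, hx⟩
    refine ⟨-t, by simpa using ht, ?_⟩
    rw [← neg_neg x, hx]
    simp only [Pi.neg_apply, neg_smul, sum_neg_distrib]
    abel
  · rintro ⟨t, ht, rfl⟩
    refine ⟨-t, by simpa using ht, ?_⟩
    simp only [Pi.neg_apply, neg_smul, sum_neg_distrib]
    abel

theorem inner_center_add_sqrt_le_of_forall_mem_ellipsoid {c u : F} {v : ι → F} {α : ι → ℝ}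
    {r : ℝ} (h : ∀ x ∈ ellipsoid c v α, ⟪x, u⟫_ℝ ≤ r) :
    ⟪c, u⟫_ℝ + √(∑ j, α j ^ 2 * ⟪v j, u⟫_ℝ ^ 2) ≤ r := by
  obtain ⟨t, ht, hsup⟩ := exists_sum_sq_div_sq_le_one_and_sum_mul_eq_sqrt α (fun j ↦ ⟪v j, u⟫_ℝ)
  have := h _ ⟨t, ht, rfl⟩
  simp only [inner_add_left, sum_inner, real_inner_smul_left] at this
  rwa [← hsup]

theorem sum_sq_mul_inner_sq_le_one_of_ellipsoid_subset {K : Set F} (hK : K = -K) {u : F}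
    (hu : ∀ x ∈ K, ⟪x, u⟫_ℝ ≤ 1) {c : F} {v : ι → F} {α : ι → ℝ} (hE : ellipsoid c v α ⊆ K) :
    ∑ j, α j ^ 2 * ⟪v j, u⟫_ℝ ^ 2 ≤ 1 := by
  have hE' : ellipsoid (-c) v α ⊆ K := by
    rw [← neg_ellipsoid, hK]
    exact Set.neg_subset_neg.2 hE
  have hplus := inner_center_add_sqrt_le_of_forall_mem_ellipsoid fun x hx ↦ hu x (hE hx)
  have hminus := inner_center_add_sqrt_le_of_forall_mem_ellipsoid fun x hx ↦ hu x (hE' hx)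
  rw [inner_neg_left] at hminus
  exact Real.sqrt_le_one.1 (by linarith)

end Ellipsoid

section JohnDecomposition

variable {F : Type*} [NormedAddCommGroup F] [InnerProductSpace ℝ F] {κ : Type*} [Fintype κ]
  {u : κ → F} {lam : κ → ℝ}

theorem sum_mul_inner_sq_eq_norm_sq (hdecomp : ∀ x : F, ∑ i, (lam i * ⟪u i, x⟫_ℝ) • u i = x)
    (x : F) : ∑ i, lam i * ⟪u i, x⟫_ℝ ^ 2 = ‖x‖ ^ 2 := by
  have := congrArg (⟪·, x⟫_ℝ) (hdecomp x)
  simp only [sum_inner, real_inner_smul_left, real_inner_self_eq_norm_sq] at this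
  rw [← this]
  exact sum_congr rfl fun i _ ↦ by ring

theorem sum_mul_norm_sq_eq_finrank [FiniteDimensional ℝ F]
    (hdecomp : ∀ x : F, ∑ i, (lam i * ⟪u i, x⟫_ℝ) • u i = x) :
    ∑ i, lam i * ‖u i‖ ^ 2 = Module.finrank ℝ F := by
  let b := stdOrthonormalBasis ℝ F
  calc ∑ i, lam i * ‖u i‖ ^ 2 = ∑ i, ∑ l, lam i * ⟪u i, b l⟫_ℝ ^ 2 := by
        simp only [← mul_sum, b.sum_sq_inner_left]
    _ = ∑ l, ‖b l‖ ^ 2 := by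
        rw [sum_comm]
        simp only [sum_mul_inner_sq_eq_norm_sq hdecomp]
    _ = Module.finrank ℝ F := by simp [b.orthonormal.1]

theorem sum_sq_le_finrank_of_forall_sum_sq_mul_inner_sq_le_one [FiniteDimensional ℝ F]
    (hdecomp : ∀ x : F, ∑ i, (lam i * ⟪u i, x⟫_ℝ) • u i = x) (hu : ∀ i, ‖u i‖ = 1)
    (hlam : ∀ i, 0 ≤ lam i) {ι : Type*} [Fintype ι] {v : ι → F} (hv : ∀ j, ‖v j‖ = 1)
    {α : ι → ℝ} (hα : ∀ i, ∑ j, α j ^ 2 * ⟪v j, u i⟫_ℝ ^ 2 ≤ 1) :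
    ∑ j, α j ^ 2 ≤ Module.finrank ℝ F := by
  calc ∑ j, α j ^ 2 = ∑ j, α j ^ 2 * ∑ i, lam i * ⟪u i, v j⟫_ℝ ^ 2 := by
        simp [sum_mul_inner_sq_eq_norm_sq hdecomp, hv]
    _ = ∑ i, lam i * ∑ j, α j ^ 2 * ⟪v j, u i⟫_ℝ ^ 2 := by
        simp only [mul_sum]
        rw [sum_comm]
        exact sum_congr rfl fun i _ ↦ sum_congr rfl fun j _ ↦ by rw [real_inner_comm]; ring
    _ ≤ ∑ i, lam i := sum_le_sum fun i _ ↦ mul_le_of_le_one_right (hlam i) (hα i)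
    _ = Module.finrank ℝ F := by simpa [hu] using sum_mul_norm_sq_eq_finrank hdecomp

end JohnDecomposition

theorem stmt7_general (n k : ℕ)
    (K : Set (EuclideanSpace ℝ (Fin n)))
    (hKsym : K = -K)
    (m : ℕ) (u : Fin m → EuclideanSpace ℝ (Fin n)) (lam : Fin m → ℝ)
    (hu : ∀ i, ‖u i‖ = 1) (hlam : ∀ i, 0 < lam i)
    (hdecomp : ∀ x : EuclideanSpace ℝ (Fin n), ∑ i, (lam i * ⟪u i, x⟫_ℝ) • u i = x)
    (hsupp : ∀ x ∈ K, ∀ i, ⟪x, u i⟫_ℝ ≤ 1)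
    (v : Fin k → EuclideanSpace ℝ (Fin n)) (hv : Orthonormal ℝ v)
    (c : EuclideanSpace ℝ (Fin n))
    (α : Fin k → ℝ)
    (Eell : Set (EuclideanSpace ℝ (Fin n)))
    (hEell : Eell = {x | ∃ t : Fin k → ℝ,
      ∑ j, (t j) ^ 2 / (α j) ^ 2 ≤ 1 ∧ x = c + ∑ j, t j • v j})
    (hEK : Eell ⊆ K) :
    ∏ j, α j ≤ Real.sqrt ((n : ℝ) / k) ^ k := by
  subst hEell
  have hwidth (i : Fin m) : ∑ j, α j ^ 2 * ⟪v j, u i⟫_ℝ ^ 2 ≤ 1 :=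
    sum_sq_mul_inner_sq_le_one_of_ellipsoid_subset hKsym (fun x hx ↦ hsupp x hx i) hEK
  have hsum_sq : ∑ j, α j ^ 2 ≤ n := by
    simpa using sum_sq_le_finrank_of_forall_sum_sq_mul_inner_sq_le_one hdecomp hu
      (fun i ↦ (hlam i).le) hv.1 hwidth
  simpa using prod_le_sqrt_div_card_pow_of_sum_sq_le α hsum_sq

/-- upper bound for ellipsoids inscribed in a centrally symmetric
convex body in John position. -/
theorem stmt7 (n k : ℕ) (hn : 2 ≤ n) (hk : 1 ≤ k) (hkn : k ≤ n - 1)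
    (K : Set (EuclideanSpace ℝ (Fin n)))
    (hKcompact : IsCompact K) (hKconv : Convex ℝ K) (hKint : (interior K).Nonempty)
    (hKsym : K = -K)
    (hBK : Metric.closedBall 0 1 ⊆ K)
    (m : ℕ) (u : Fin m → EuclideanSpace ℝ (Fin n)) (lam : Fin m → ℝ)
    (hu : ∀ i, ‖u i‖ = 1) (hlam : ∀ i, 0 < lam i)
    (hsum : ∑ i, lam i • u i = 0)
    (hdecomp : ∀ x : EuclideanSpace ℝ (Fin n), ∑ i, (lam i * ⟪u i, x⟫_ℝ) • u i = x)
    (hsupp : ∀ x ∈ K, ∀ i, ⟪x, u i⟫_ℝ ≤ 1)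
    (v : Fin k → EuclideanSpace ℝ (Fin n)) (hv : Orthonormal ℝ v)
    (c : EuclideanSpace ℝ (Fin n))
    (α : Fin k → ℝ) (hα : ∀ j, 0 < α j)
    (Eell : Set (EuclideanSpace ℝ (Fin n)))
    (hEell : Eell = {x | ∃ t : Fin k → ℝ,
      ∑ j, (t j) ^ 2 / (α j) ^ 2 ≤ 1 ∧ x = c + ∑ j, t j • v j})
    (hEK : Eell ⊆ K) :
    ∏ j, α j ≤ Real.sqrt ((n : ℝ) / k) ^ k :=
  stmt7_general n k K hKsym m u lam hu hlam hdecomp hsupp v hv c α Eell hEell hEK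
end

section
/- Let n ≥ 2, let v¹,…,vⁿ ∈ ℝⁿ be an orthonormal basis, let J ⊆ {1,…,n−1} with l := |J|, and let τ ∈ [√((n−l)/((l+1)n)), 1]. For each function δ : J → {−1,1} define a^δ := ∑_{j∈J} δ(j)·√((1−τ²)/l)·vⱼ + τ·vⁿ, and for each function σ : {1,…,n−1} → {−1,1} define b^σ := ∑_{j∈J} σ(j)·√(((l+1)nτ² + l − n)/(l·n²·τ²))·vⱼ + ∑_{j∈{1,…,n−1}∖J} σ(j)·(√(nτ²+1)/(nτ))·vⱼ − (1/(nτ))·vⁿ. Set λ_a := 2^{−l}·n/(nτ²+1) and λ_b := 2^{−(n−1)}·n²τ²/(nτ²+1). Then every a^δ and every b^σ is a unit vector, ∑_δ λ_a·a^δ + ∑_σ λ_b·b^σ = 0, and for every x ∈ ℝⁿ one has ∑_δ λ_a·⟨a^δ,x⟩·a^δ + ∑_σ λ_b·⟨b^σ,x⟩·b^σ = x (i.e., the vectors a^δ, b^σ with weights λ_a, λ_b form a John decomposition). -/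
open scoped InnerProductSpace BigOperators

lemma sgn_sq (sgn : Bool → ℝ) (hsgn : ∀ p, sgn p = if p then 1 else -1) (p : Bool) :
    sgn p * sgn p = 1 := by cases p <;> simp [hsgn]

lemma sgn_not (sgn : Bool → ℝ) (hsgn : ∀ p, sgn p = if p then 1 else -1) (p : Bool) :
    sgn (!p) = - sgn p := by cases p <;> simp [hsgn]

lemma sgnsum0 {ι : Type*} [Fintype ι] [DecidableEq ι] :
    ∑ _δ : ι → Bool, (1 : ℝ) = 2 ^ Fintype.card ι := by
  simp [Finset.card_univ, Fintype.card_fun]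

lemma sgnsum1 {ι : Type*} [Fintype ι] [DecidableEq ι]
    (sgn : Bool → ℝ) (hsgn : ∀ p, sgn p = if p then 1 else -1) (j : ι) :
    ∑ δ : ι → Bool, sgn (δ j) = 0 := by
  apply Finset.sum_ninvolution (fun δ => Function.update δ j (!(δ j)))
  · intro δ; simp [Function.update_self, sgn_not sgn hsgn]
  · intro δ h
    intro hc
    have := congrFun hc j
    simp [Function.update_self] at this
  · intro δ; exact Finset.mem_univ _
  · intro δ
    funext k
    by_cases hk : k = j
    · subst hk; simp [Function.update_self]
    · simp [Function.update_of_ne hk]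

lemma sgnsum2 {ι : Type*} [Fintype ι] [DecidableEq ι]
    (sgn : Bool → ℝ) (hsgn : ∀ p, sgn p = if p then 1 else -1) (j k : ι) :
    ∑ δ : ι → Bool, sgn (δ j) * sgn (δ k) =
      if j = k then (2 : ℝ) ^ Fintype.card ι else 0 := by
  by_cases h : j = k
  · subst h
    simp only [if_pos rfl]
    rw [← sgnsum0 (ι := ι)]
    exact Finset.sum_congr rfl fun δ _ => sgn_sq sgn hsgn _
  · rw [if_neg h]
    apply Finset.sum_ninvolution (fun δ => Function.update δ j (!(δ j)))
    · intro δ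
      simp [Function.update_self, Function.update_of_ne (Ne.symm h), sgn_not sgn hsgn]
    · intro δ _
      intro hc
      have := congrFun hc j
      simp [Function.update_self] at this
    · intro δ; exact Finset.mem_univ _
    · intro δ
      funext m
      by_cases hm : m = j
      · subst hm; simp [Function.update_self]
      · simp [Function.update_of_ne hm]

set_option maxHeartbeats 1000000 in
/-- the explicit family of John decompositions from the construction
lemma (Lemma 3.7 of the paper). The indices `1, …, n-1` are modelled by
`Fin (n-1)`, embedded into `Fin n` via `Fin.castLE`, and the last basis vector is
`v ⟨n-1, _⟩`. Signs `±1` are modelled by `Bool` via `sgn`. -/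
theorem stmt9 (n : ℕ) (hn : 2 ≤ n)
    (v : Fin n → EuclideanSpace ℝ (Fin n)) (hv : Orthonormal ℝ v)
    (hvspan : Submodule.span ℝ (Set.range v) = ⊤)
    (J : Finset (Fin (n - 1))) (l : ℕ) (hl : l = J.card)
    (τ : ℝ) (hτ1 : Real.sqrt (((n : ℝ) - l) / (((l : ℝ) + 1) * n)) ≤ τ) (hτ2 : τ ≤ 1)
    (sgn : Bool → ℝ) (hsgn : ∀ p, sgn p = if p then 1 else -1)
    (a : ({x // x ∈ J} → Bool) → EuclideanSpace ℝ (Fin n))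
    (ha : ∀ δ, a δ =
      (∑ j ∈ J.attach, (sgn (δ j) * Real.sqrt ((1 - τ ^ 2) / l)) •
          v (Fin.castLE (Nat.sub_le n 1) j.1))
        + τ • v ⟨n - 1, by omega⟩)
    (b : (Fin (n - 1) → Bool) → EuclideanSpace ℝ (Fin n))
    (hb : ∀ σ, b σ =
      (∑ j ∈ J, (sgn (σ j) *
          Real.sqrt ((((l : ℝ) + 1) * n * τ ^ 2 + l - n) / ((l : ℝ) * n ^ 2 * τ ^ 2))) •
          v (Fin.castLE (Nat.sub_le n 1) j))
        + (∑ j ∈ Jᶜ, (sgn (σ j) * (Real.sqrt ((n : ℝ) * τ ^ 2 + 1) / ((n : ℝ) * τ))) •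
          v (Fin.castLE (Nat.sub_le n 1) j))
        - (1 / ((n : ℝ) * τ)) • v ⟨n - 1, by omega⟩)
    (lamA lamB : ℝ)
    (hlamA : lamA = (1 / 2 ^ l) * ((n : ℝ) / ((n : ℝ) * τ ^ 2 + 1)))
    (hlamB : lamB = (1 / 2 ^ (n - 1)) * ((n : ℝ) ^ 2 * τ ^ 2 / ((n : ℝ) * τ ^ 2 + 1))) :
    (∀ δ, ‖a δ‖ = 1) ∧ (∀ σ, ‖b σ‖ = 1) ∧ (0 < lamA) ∧ (0 < lamB) ∧
    ((∑ δ : {x // x ∈ J} → Bool, lamA • a δ) + (∑ σ : Fin (n - 1) → Bool, lamB • b σ) = 0) ∧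
    (∀ x : EuclideanSpace ℝ (Fin n),
      (∑ δ : {x // x ∈ J} → Bool, (lamA * ⟪a δ, x⟫_ℝ) • a δ)
        + (∑ σ : Fin (n - 1) → Bool, (lamB * ⟪b σ, x⟫_ℝ) • b σ) = x) := by
  set E : Fin (n - 1) → Fin n := Fin.castLE (Nat.sub_le n 1) with hE
  set L : Fin n := ⟨n - 1, by omega⟩ with hL
  set cA : ℝ := Real.sqrt ((1 - τ ^ 2) / l) with hcA
  set cB : ℝ := Real.sqrt ((((l : ℝ) + 1) * n * τ ^ 2 + l - n) / ((l : ℝ) * n ^ 2 * τ ^ 2))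
    with hcB
  set cE : ℝ := Real.sqrt ((n : ℝ) * τ ^ 2 + 1) / ((n : ℝ) * τ) with hcE
  clear_value E L cA cB cE
  -- basic numeric facts
  have hn0 : (0 : ℝ) < n := by exact_mod_cast Nat.cast_pos.mpr (by omega)
  have hlle : l ≤ n - 1 := by
    rw [hl]
    simpa using Finset.card_le_univ J
  have hln : (l : ℝ) ≤ (n : ℝ) - 1 := by
    have : (l : ℝ) ≤ ((n - 1 : ℕ) : ℝ) := by exact_mod_cast hlle
    have h2 : ((n - 1 : ℕ) : ℝ) = (n : ℝ) - 1 := by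
      have : (1:ℕ) ≤ n := by omega
      push_cast [this]
      ring
    linarith [this, h2.le]
  have hτ0 : 0 < τ := by
    have hx : (0:ℝ) < ((n : ℝ) - l) / (((l : ℝ) + 1) * n) := by
      apply div_pos (by linarith) (by positivity)
    calc (0:ℝ) < Real.sqrt (((n : ℝ) - l) / (((l : ℝ) + 1) * n)) := Real.sqrt_pos.mpr hx
      _ ≤ τ := hτ1
  have hτsq : ((n : ℝ) - l) / (((l : ℝ) + 1) * n) ≤ τ ^ 2 := by
    have h := pow_le_pow_left₀ (Real.sqrt_nonneg _) hτ1 2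
    rwa [Real.sq_sqrt (div_nonneg (by linarith) (by positivity))] at h
  have hnum : 0 ≤ ((l : ℝ) + 1) * n * τ ^ 2 + l - n := by
    rw [div_le_iff₀ (by positivity : (0:ℝ) < ((l : ℝ) + 1) * n)] at hτsq
    nlinarith
  have h1τ : 0 ≤ 1 - τ ^ 2 := by nlinarith
  have hl0τ : l = 0 → τ = 1 := by
    intro h0
    subst h0
    simp only [Nat.cast_zero, zero_add, one_mul, sub_zero] at hτsq
    rw [div_self (ne_of_gt hn0)] at hτsq
    nlinarith
  have hτne : τ ≠ 0 := ne_of_gt hτ0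
  have hnne : (n : ℝ) ≠ 0 := ne_of_gt hn0
  have hden : (0:ℝ) < (n : ℝ) * τ ^ 2 + 1 := by positivity
  have hdenne : (n : ℝ) * τ ^ 2 + 1 ≠ 0 := ne_of_gt hden
  -- inner products of basis vectors
  have hvi : ∀ i j : Fin n, ⟪v i, v j⟫_ℝ = if i = j then 1 else 0 :=
    orthonormal_iff_ite.mp hv
  have hEL : ∀ j : Fin (n - 1), E j ≠ L := by
    intro j h
    have h2 : (E j).val = L.val := congrArg Fin.val h
    have h3 : (E j).val = j.val := by rw [hE]; rfl
    have h4 : L.val = n - 1 := by rw [hL]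
    have := j.isLt
    omega
  have hEinj : ∀ i j : Fin (n - 1), E i = E j ↔ i = j := by
    intro i j
    simp [hE]
  -- inner products with a δ
  have innA_L : ∀ δ, ⟪a δ, v L⟫_ℝ = τ := by
    intro δ
    rw [ha δ, inner_add_left, sum_inner, real_inner_smul_left, hvi]
    rw [Finset.sum_eq_zero, if_pos rfl]
    · ring
    · intro j _
      rw [real_inner_smul_left, hvi, if_neg (hEL j.1)]
      ring
  have innA_E : ∀ δ (m : Fin (n - 1)) (h : m ∈ J),
      ⟪a δ, v (E m)⟫_ℝ = sgn (δ ⟨m, h⟩) * cA := by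
    intro δ m h
    rw [ha δ, inner_add_left, sum_inner, real_inner_smul_left, hvi,
      if_neg (Ne.symm (hEL m))]
    rw [Finset.sum_eq_single_of_mem ⟨m, h⟩ (Finset.mem_attach _ _)]
    · rw [real_inner_smul_left, hvi, if_pos rfl]
      ring
    · intro j _ hj
      rw [real_inner_smul_left, hvi, if_neg, mul_zero]
      rw [hEinj]
      intro hc
      exact hj (Subtype.ext hc)
  have innA_E' : ∀ δ (m : Fin (n - 1)), m ∉ J → ⟪a δ, v (E m)⟫_ℝ = 0 := by
    intro δ m h
    rw [ha δ, inner_add_left, sum_inner, real_inner_smul_left, hvi,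
      if_neg (Ne.symm (hEL m))]
    rw [Finset.sum_eq_zero, mul_zero, add_zero]
    intro j _
    rw [real_inner_smul_left, hvi, if_neg, mul_zero]
    rw [hEinj]
    intro hc
    rw [← hc] at h
    exact h j.2
  -- inner products with b σ
  have innB_L : ∀ σ, ⟪b σ, v L⟫_ℝ = -(1 / ((n : ℝ) * τ)) := by
    intro σ
    rw [hb σ, inner_sub_left, inner_add_left, sum_inner, sum_inner,
      real_inner_smul_left, hvi, if_pos rfl]
    rw [Finset.sum_eq_zero, Finset.sum_eq_zero]
    · ring
    · intro j _
      rw [real_inner_smul_left, hvi, if_neg (hEL j)]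
      ring
    · intro j _
      rw [real_inner_smul_left, hvi, if_neg (hEL j)]
      ring
  have innB_E : ∀ σ (m : Fin (n - 1)),
      ⟪b σ, v (E m)⟫_ℝ = sgn (σ m) * (if m ∈ J then cB else cE) := by
    intro σ m
    rw [hb σ, inner_sub_left, inner_add_left, sum_inner, sum_inner,
      real_inner_smul_left, hvi, if_neg (Ne.symm (hEL m)), mul_zero, sub_zero]
    by_cases hm : m ∈ J
    · rw [if_pos hm]
      rw [Finset.sum_eq_single_of_mem m hm, Finset.sum_eq_zero]
      · rw [real_inner_smul_left, hvi, if_pos rfl]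
        ring
      · intro j hj
        rw [real_inner_smul_left, hvi, if_neg, mul_zero]
        rw [hEinj]
        intro hc
        rw [hc] at hj
        exact (Finset.mem_compl.mp hj) hm
      · intro j _ hj
        rw [real_inner_smul_left, hvi, if_neg, mul_zero]
        rw [hEinj]
        exact hj
    · rw [if_neg hm]
      rw [Finset.sum_eq_single_of_mem m (Finset.mem_compl.mpr hm), Finset.sum_eq_zero]
      · rw [real_inner_smul_left, hvi, if_pos rfl]
        ring
      · intro j hj
        rw [real_inner_smul_left, hvi, if_neg, mul_zero]
        rw [hEinj]
        intro hc
        rw [hc] at hj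
        exact hm hj
      · intro j _ hj
        rw [real_inner_smul_left, hvi, if_neg, mul_zero]
        rw [hEinj]
        exact hj
  -- squares of the coefficients
  have hAA : cA * cA = (1 - τ ^ 2) / l := by
    rw [hcA, Real.mul_self_sqrt (div_nonneg h1τ (Nat.cast_nonneg l))]
  have hBB : l ≠ 0 →
      cB * cB = (((l : ℝ) + 1) * n * τ ^ 2 + l - n) / ((l : ℝ) * n ^ 2 * τ ^ 2) := by
    intro hl0
    have hlpos : (0:ℝ) < l := by exact_mod_cast Nat.pos_of_ne_zero hl0
    rw [hcB, Real.mul_self_sqrt (div_nonneg hnum (by positivity))]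
  have hEE : cE * cE = ((n : ℝ) * τ ^ 2 + 1) / (((n : ℝ) * τ) * ((n : ℝ) * τ)) := by
    rw [hcE, div_mul_div_comm, Real.mul_self_sqrt (by positivity)]
  -- the two global weights
  have hA : lamA * 2 ^ l = (n : ℝ) / ((n : ℝ) * τ ^ 2 + 1) := by
    rw [hlamA]
    field_simp
  have hB : lamB * 2 ^ (n - 1) = (n : ℝ) ^ 2 * τ ^ 2 / ((n : ℝ) * τ ^ 2 + 1) := by
    rw [hlamB]
    field_simp
  -- scalar identities
  have Z1 : 2 ^ l * (lamA * τ) + 2 ^ (n - 1) * (lamB * (-(1 / ((n : ℝ) * τ)))) = 0 := by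
    have e : 2 ^ l * (lamA * τ) + 2 ^ (n - 1) * (lamB * (-(1 / ((n : ℝ) * τ))))
        = (lamA * 2 ^ l) * τ - (lamB * 2 ^ (n - 1)) * (1 / ((n : ℝ) * τ)) := by ring
    rw [e, hA, hB]
    field_simp
    ring
  have Z2 : 2 ^ l * ((lamA * τ) * τ)
      + 2 ^ (n - 1) * ((lamB * (-(1 / ((n : ℝ) * τ)))) * (-(1 / ((n : ℝ) * τ)))) = 1 := by
    have e : 2 ^ l * ((lamA * τ) * τ)
        + 2 ^ (n - 1) * ((lamB * (-(1 / ((n : ℝ) * τ)))) * (-(1 / ((n : ℝ) * τ))))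
        = (lamA * 2 ^ l) * τ ^ 2
          + (lamB * 2 ^ (n - 1)) * ((1 / ((n : ℝ) * τ)) * (1 / ((n : ℝ) * τ))) := by ring
    rw [e, hA, hB]
    field_simp
  have ZC : (2 ^ (n - 1) * (lamB * cE)) * cE = 1 := by
    have e : (2 ^ (n - 1) * (lamB * cE)) * cE = (lamB * 2 ^ (n - 1)) * (cE * cE) := by ring
    rw [e, hB, hEE]
    field_simp
  have ZJ : l ≠ 0 → (2 ^ l * (lamA * cA)) * cA + (2 ^ (n - 1) * (lamB * cB)) * cB = 1 := by
    intro hl0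
    have hlpos : (0:ℝ) < l := by exact_mod_cast Nat.pos_of_ne_zero hl0
    have hlne : (l : ℝ) ≠ 0 := ne_of_gt hlpos
    have e : (2 ^ l * (lamA * cA)) * cA + (2 ^ (n - 1) * (lamB * cB)) * cB
        = (lamA * 2 ^ l) * (cA * cA) + (lamB * 2 ^ (n - 1)) * (cB * cB) := by ring
    rw [e, hA, hB, hAA, hBB hl0]
    field_simp
    ring
  have hcardA : (Finset.univ : Finset ({x // x ∈ J} → Bool)).card = 2 ^ l := by
    rw [Finset.card_univ, Fintype.card_fun, Fintype.card_coe, Fintype.card_bool, hl]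
  have hcardB : (Finset.univ : Finset (Fin (n - 1) → Bool)).card = 2 ^ (n - 1) := by
    rw [Finset.card_univ, Fintype.card_fun, Fintype.card_fin, Fintype.card_bool]
  have hcardA' : Fintype.card {x // x ∈ J} = l := by rw [Fintype.card_coe, hl]
  have hcardB' : Fintype.card (Fin (n - 1)) = n - 1 := Fintype.card_fin _
  -- expansion of weighted sums
  have expandA : ∀ (t : ({x // x ∈ J} → Bool) → ℝ),
      (∑ δ : {x // x ∈ J} → Bool, t δ • a δ)
        = (∑ j ∈ J.attach,
            ((∑ δ : {x // x ∈ J} → Bool, t δ * sgn (δ j)) * cA) • v (E j.1))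
          + (∑ δ : {x // x ∈ J} → Bool, t δ) • (τ • v L) := by
    intro t
    have h1 : ∀ δ : {x // x ∈ J} → Bool, t δ • a δ
        = (∑ j ∈ J.attach, ((t δ * sgn (δ j)) * cA) • v (E j.1)) + (t δ * τ) • v L := by
      intro δ
      rw [ha δ, smul_add, Finset.smul_sum, smul_smul]
      congr 1
      refine Finset.sum_congr rfl fun j _ => ?_
      rw [smul_smul, ← mul_assoc]
    calc ∑ δ : {x // x ∈ J} → Bool, t δ • a δ
        = ∑ δ : {x // x ∈ J} → Bool,
            ((∑ j ∈ J.attach, ((t δ * sgn (δ j)) * cA) • v (E j.1)) + (t δ * τ) • v L) :=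
          Finset.sum_congr rfl fun δ _ => h1 δ
      _ = (∑ δ : {x // x ∈ J} → Bool, ∑ j ∈ J.attach, ((t δ * sgn (δ j)) * cA) • v (E j.1))
            + ∑ δ : {x // x ∈ J} → Bool, (t δ * τ) • v L := Finset.sum_add_distrib
      _ = (∑ j ∈ J.attach,
            ((∑ δ : {x // x ∈ J} → Bool, t δ * sgn (δ j)) * cA) • v (E j.1))
          + (∑ δ : {x // x ∈ J} → Bool, t δ) • (τ • v L) := by
          rw [Finset.sum_comm]
          congr 1
          · refine Finset.sum_congr rfl fun j _ => ?_
            rw [← Finset.sum_smul, ← Finset.sum_mul]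
          · rw [smul_smul, ← Finset.sum_smul, ← Finset.sum_mul]
  have expandB : ∀ (t : (Fin (n - 1) → Bool) → ℝ),
      (∑ σ : Fin (n - 1) → Bool, t σ • b σ)
        = (∑ j ∈ J, ((∑ σ : Fin (n - 1) → Bool, t σ * sgn (σ j)) * cB) • v (E j))
          + (∑ j ∈ Jᶜ, ((∑ σ : Fin (n - 1) → Bool, t σ * sgn (σ j)) * cE) • v (E j))
          + (∑ σ : Fin (n - 1) → Bool, t σ) • ((-(1 / ((n : ℝ) * τ))) • v L) := by
    intro t
    have h1 : ∀ σ : Fin (n - 1) → Bool, t σ • b σ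
        = (∑ j ∈ J, ((t σ * sgn (σ j)) * cB) • v (E j))
          + (∑ j ∈ Jᶜ, ((t σ * sgn (σ j)) * cE) • v (E j))
          + (t σ * (-(1 / ((n : ℝ) * τ)))) • v L := by
      intro σ
      rw [hb σ, smul_sub, smul_add, Finset.smul_sum, Finset.smul_sum, smul_smul]
      rw [sub_eq_add_neg, ← neg_smul]
      congr 2
      · refine Finset.sum_congr rfl fun j _ => ?_
        rw [smul_smul, ← mul_assoc]
      · refine Finset.sum_congr rfl fun j _ => ?_
        rw [smul_smul, ← mul_assoc]
      · ring
    calc ∑ σ : Fin (n - 1) → Bool, t σ • b σ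
        = ∑ σ : Fin (n - 1) → Bool,
            ((∑ j ∈ J, ((t σ * sgn (σ j)) * cB) • v (E j))
              + (∑ j ∈ Jᶜ, ((t σ * sgn (σ j)) * cE) • v (E j))
              + (t σ * (-(1 / ((n : ℝ) * τ)))) • v L) :=
          Finset.sum_congr rfl fun σ _ => h1 σ
      _ = (∑ σ : Fin (n - 1) → Bool, ∑ j ∈ J, ((t σ * sgn (σ j)) * cB) • v (E j))
            + (∑ σ : Fin (n - 1) → Bool, ∑ j ∈ Jᶜ, ((t σ * sgn (σ j)) * cE) • v (E j))
            + ∑ σ : Fin (n - 1) → Bool, (t σ * (-(1 / ((n : ℝ) * τ)))) • v L := by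
          rw [Finset.sum_add_distrib, Finset.sum_add_distrib]
      _ = (∑ j ∈ J, ((∑ σ : Fin (n - 1) → Bool, t σ * sgn (σ j)) * cB) • v (E j))
          + (∑ j ∈ Jᶜ, ((∑ σ : Fin (n - 1) → Bool, t σ * sgn (σ j)) * cE) • v (E j))
          + (∑ σ : Fin (n - 1) → Bool, t σ) • ((-(1 / ((n : ℝ) * τ))) • v L) := by
          rw [Finset.sum_comm (s := (Finset.univ : Finset (Fin (n - 1) → Bool))) (t := J)]
          rw [Finset.sum_comm (s := (Finset.univ : Finset (Fin (n - 1) → Bool))) (t := Jᶜ)]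
          congr 1
          congr 1
          · refine Finset.sum_congr rfl fun j _ => ?_
            rw [← Finset.sum_smul, ← Finset.sum_mul]
          · refine Finset.sum_congr rfl fun j _ => ?_
            rw [← Finset.sum_smul, ← Finset.sum_mul]
          · rw [smul_smul, ← Finset.sum_smul, ← Finset.sum_mul]
  -- specialized weighted sums
  have sumA_const : ∀ c : ℝ,
      (∑ δ : {x // x ∈ J} → Bool, c • a δ) = ((2:ℝ) ^ l * (c * τ)) • v L := by
    intro c
    have h0 : (∑ j ∈ J.attach,
        ((∑ δ : {x // x ∈ J} → Bool, (fun _ => c) δ * sgn (δ j)) * cA) • v (E j.1)) = 0 :=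
      Finset.sum_eq_zero fun j _ => by
        rw [← Finset.mul_sum, sgnsum1 sgn hsgn j, mul_zero, zero_mul, zero_smul]
    rw [expandA (fun _ => c), h0, zero_add, Finset.sum_const, hcardA, nsmul_eq_mul,
      smul_smul]
    congr 1
    push_cast
    ring
  have sumB_const : ∀ c : ℝ,
      (∑ σ : Fin (n - 1) → Bool, c • b σ)
        = ((2:ℝ) ^ (n - 1) * (c * (-(1 / ((n : ℝ) * τ))))) • v L := by
    intro c
    have h0 : (∑ j ∈ J,
        ((∑ σ : Fin (n - 1) → Bool, (fun _ => c) σ * sgn (σ j)) * cB) • v (E j)) = 0 :=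
      Finset.sum_eq_zero fun j _ => by
        rw [← Finset.mul_sum, sgnsum1 sgn hsgn j, mul_zero, zero_mul, zero_smul]
    have h0' : (∑ j ∈ Jᶜ,
        ((∑ σ : Fin (n - 1) → Bool, (fun _ => c) σ * sgn (σ j)) * cE) • v (E j)) = 0 :=
      Finset.sum_eq_zero fun j _ => by
        rw [← Finset.mul_sum, sgnsum1 sgn hsgn j, mul_zero, zero_mul, zero_smul]
    rw [expandB (fun _ => c), h0, h0', zero_add, zero_add, Finset.sum_const, hcardB,
      nsmul_eq_mul, smul_smul]
    congr 1
    push_cast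
    ring
  have sumA_sign : ∀ (c : ℝ) (p : {x // x ∈ J}),
      (∑ δ : {x // x ∈ J} → Bool, (c * sgn (δ p)) • a δ)
        = (((2:ℝ) ^ l * c) * cA) • v (E p.1) := by
    intro c p
    have hcomp : ∀ j : {x // x ∈ J},
        (∑ δ : {x // x ∈ J} → Bool, (c * sgn (δ p)) * sgn (δ j))
          = c * (if p = j then (2:ℝ) ^ l else 0) := by
      intro j
      simp only [mul_assoc]
      rw [← Finset.mul_sum, sgnsum2 sgn hsgn p j, hcardA']
    have h1 : ∀ j ∈ J.attach,
        ((∑ δ : {x // x ∈ J} → Bool, (fun δ => c * sgn (δ p)) δ * sgn (δ j)) * cA) • v (E j.1)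
          = if p = j then (((2:ℝ) ^ l * c) * cA) • v (E j.1) else 0 := by
      intro j _
      rw [hcomp j]
      by_cases h : p = j
      · rw [if_pos h, if_pos h, mul_comm c ((2:ℝ) ^ l)]
      · rw [if_neg h, if_neg h, mul_zero, zero_mul, zero_smul]
    have h2 : (∑ δ : {x // x ∈ J} → Bool, (fun δ => c * sgn (δ p)) δ) = 0 := by
      rw [← Finset.mul_sum, sgnsum1 sgn hsgn p, mul_zero]
    rw [expandA (fun δ => c * sgn (δ p)), Finset.sum_congr rfl h1, h2, zero_smul, add_zero,
      Finset.sum_ite_eq, if_pos (Finset.mem_attach _ _)]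
  have sumB_sign : ∀ (c : ℝ) (p : Fin (n - 1)),
      (∑ σ : Fin (n - 1) → Bool, (c * sgn (σ p)) • b σ)
        = (((2:ℝ) ^ (n - 1) * c) * (if p ∈ J then cB else cE)) • v (E p) := by
    intro c p
    have hcomp : ∀ j : Fin (n - 1),
        (∑ σ : Fin (n - 1) → Bool, (c * sgn (σ p)) * sgn (σ j))
          = c * (if p = j then (2:ℝ) ^ (n - 1) else 0) := by
      intro j
      simp only [mul_assoc]
      rw [← Finset.mul_sum, sgnsum2 sgn hsgn p j, hcardB']
    have h1 : ∀ j ∈ J,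
        ((∑ σ : Fin (n - 1) → Bool, (fun σ => c * sgn (σ p)) σ * sgn (σ j)) * cB) • v (E j)
          = if p = j then (((2:ℝ) ^ (n - 1) * c) * cB) • v (E j) else 0 := by
      intro j _
      rw [hcomp j]
      by_cases h : p = j
      · rw [if_pos h, if_pos h, mul_comm c ((2:ℝ) ^ (n - 1))]
      · rw [if_neg h, if_neg h, mul_zero, zero_mul, zero_smul]
    have h1' : ∀ j ∈ Jᶜ,
        ((∑ σ : Fin (n - 1) → Bool, (fun σ => c * sgn (σ p)) σ * sgn (σ j)) * cE) • v (E j)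
          = if p = j then (((2:ℝ) ^ (n - 1) * c) * cE) • v (E j) else 0 := by
      intro j _
      rw [hcomp j]
      by_cases h : p = j
      · rw [if_pos h, if_pos h, mul_comm c ((2:ℝ) ^ (n - 1))]
      · rw [if_neg h, if_neg h, mul_zero, zero_mul, zero_smul]
    have h2 : (∑ σ : Fin (n - 1) → Bool, (fun σ => c * sgn (σ p)) σ) = 0 := by
      rw [← Finset.mul_sum, sgnsum1 sgn hsgn p, mul_zero]
    rw [expandB (fun σ => c * sgn (σ p)), Finset.sum_congr rfl h1, Finset.sum_congr rfl h1',
      h2, zero_smul, add_zero, Finset.sum_ite_eq, Finset.sum_ite_eq]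
    by_cases hp : p ∈ J
    · rw [if_pos hp, if_neg (by simpa using hp), if_pos hp, add_zero]
    · rw [if_neg hp, if_pos (Finset.mem_compl.mpr hp), if_neg hp, zero_add]
  -- norms
  have normA : ∀ δ, ‖a δ‖ = 1 := by
    intro δ
    have hterm : ∀ j ∈ J.attach,
        (sgn (δ j) * cA) * ⟪v (E j.1), a δ⟫_ℝ = cA * cA := by
      intro j _
      rw [real_inner_comm, innA_E δ j.1 j.2, Subtype.coe_eta]
      linear_combination (cA * cA) * sgn_sq sgn hsgn (δ j)
    have hip : ⟪a δ, a δ⟫_ℝ = (l : ℝ) * (cA * cA) + τ * τ := by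
      have hL2 : ⟪v L, a δ⟫_ℝ = τ := by rw [real_inner_comm]; exact innA_L δ
      nth_rewrite 1 [ha δ]
      rw [inner_add_left, sum_inner]
      simp only [real_inner_smul_left]
      rw [Finset.sum_congr rfl hterm, hL2, Finset.sum_const, Finset.card_attach, ← hl,
        nsmul_eq_mul]
    have hip1 : ⟪a δ, a δ⟫_ℝ = 1 := by
      rw [hip]
      rcases Nat.eq_zero_or_pos l with h0 | h0
      · rw [h0, hl0τ h0]
        norm_num
      · have hlne : (l : ℝ) ≠ 0 := by
          exact_mod_cast Nat.pos_iff_ne_zero.mp h0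
        rw [hAA]
        field_simp
        ring
    rw [norm_eq_sqrt_real_inner, hip1, Real.sqrt_one]
  have normB : ∀ σ, ‖b σ‖ = 1 := by
    intro σ
    have hterm : ∀ j ∈ J, (sgn (σ j) * cB) * ⟪v (E j), b σ⟫_ℝ = cB * cB := by
      intro j hj
      rw [real_inner_comm, innB_E σ j, if_pos hj]
      linear_combination (cB * cB) * sgn_sq sgn hsgn (σ j)
    have hterm' : ∀ j ∈ Jᶜ, (sgn (σ j) * cE) * ⟪v (E j), b σ⟫_ℝ = cE * cE := by
      intro j hj
      rw [real_inner_comm, innB_E σ j, if_neg (Finset.mem_compl.mp hj)]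
      linear_combination (cE * cE) * sgn_sq sgn hsgn (σ j)
    have hcc : ((Jᶜ.card : ℕ) : ℝ) = (n : ℝ) - 1 - l := by
      rw [Finset.card_compl, hcardB', hl]
      have h1 : J.card ≤ n - 1 := by rw [← hl]; exact hlle
      have h2 : (1:ℕ) ≤ n := by omega
      push_cast [Nat.cast_sub h1, Nat.cast_sub h2]
      ring
    have hip : ⟪b σ, b σ⟫_ℝ = (l : ℝ) * (cB * cB) + ((n : ℝ) - 1 - l) * (cE * cE)
        + (1 / ((n : ℝ) * τ)) * (1 / ((n : ℝ) * τ)) := by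
      have hL2 : ⟪v L, b σ⟫_ℝ = -(1 / ((n : ℝ) * τ)) := by
        rw [real_inner_comm]; exact innB_L σ
      nth_rewrite 1 [hb σ]
      rw [inner_sub_left, inner_add_left, sum_inner, sum_inner]
      simp only [real_inner_smul_left]
      rw [Finset.sum_congr rfl hterm, Finset.sum_congr rfl hterm', hL2, Finset.sum_const,
        Finset.sum_const, nsmul_eq_mul, nsmul_eq_mul, ← hl, hcc]
      ring
    have hip1 : ⟪b σ, b σ⟫_ℝ = 1 := by
      rw [hip, hEE]
      rcases Nat.eq_zero_or_pos l with h0 | h0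
      · rw [h0, hl0τ h0]
        push_cast
        field_simp
        ring
      · have hlne : (l : ℝ) ≠ 0 := by
          exact_mod_cast Nat.pos_iff_ne_zero.mp h0
        rw [hBB (Nat.pos_iff_ne_zero.mp h0)]
        field_simp
        ring
    rw [norm_eq_sqrt_real_inner, hip1, Real.sqrt_one]
  -- the key identity on basis vectors
  have key : ∀ k : Fin n,
      (∑ δ : {x // x ∈ J} → Bool, (lamA * ⟪a δ, v k⟫_ℝ) • a δ)
        + (∑ σ : Fin (n - 1) → Bool, (lamB * ⟪b σ, v k⟫_ℝ) • b σ) = v k := by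
    intro k
    by_cases hk : (k : ℕ) < n - 1
    · have hkE : k = E ⟨(k : ℕ), hk⟩ := by
        rw [hE]
        exact Fin.ext rfl
      rw [hkE]
      set m : Fin (n - 1) := ⟨(k : ℕ), hk⟩ with hm'
      by_cases hm : m ∈ J
      · have hJne : l ≠ 0 := by rw [hl]; exact Finset.card_ne_zero_of_mem hm
        have e1 : (∑ δ : {x // x ∈ J} → Bool, (lamA * ⟪a δ, v (E m)⟫_ℝ) • a δ)
            = ∑ δ : {x // x ∈ J} → Bool, ((lamA * cA) * sgn (δ ⟨m, hm⟩)) • a δ :=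
          Finset.sum_congr rfl fun δ _ => by rw [innA_E δ m hm]; congr 1; ring
        have e2 : (∑ σ : Fin (n - 1) → Bool, (lamB * ⟪b σ, v (E m)⟫_ℝ) • b σ)
            = ∑ σ : Fin (n - 1) → Bool, ((lamB * cB) * sgn (σ m)) • b σ :=
          Finset.sum_congr rfl fun σ _ => by
            rw [innB_E σ m, if_pos hm]; congr 1; ring
        rw [e1, e2, sumA_sign (lamA * cA) ⟨m, hm⟩, sumB_sign (lamB * cB) m, if_pos hm]
        rw [← add_smul]
        have e3 : (2:ℝ) ^ l * (lamA * cA) * cA + (2:ℝ) ^ (n - 1) * (lamB * cB) * cB = 1 :=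
          ZJ hJne
        rw [e3, one_smul]
      · have e1 : (∑ δ : {x // x ∈ J} → Bool, (lamA * ⟪a δ, v (E m)⟫_ℝ) • a δ) = 0 :=
          Finset.sum_eq_zero fun δ _ => by
            rw [innA_E' δ m hm, mul_zero, zero_smul]
        have e2 : (∑ σ : Fin (n - 1) → Bool, (lamB * ⟪b σ, v (E m)⟫_ℝ) • b σ)
            = ∑ σ : Fin (n - 1) → Bool, ((lamB * cE) * sgn (σ m)) • b σ :=
          Finset.sum_congr rfl fun σ _ => by
            rw [innB_E σ m, if_neg hm]; congr 1; ring
        rw [e1, e2, sumB_sign (lamB * cE) m, if_neg hm, zero_add, ZC, one_smul]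
    · have hkL : k = L := by
        rw [hL]
        refine Fin.ext ?_
        have := k.isLt
        simp only []
        omega
      rw [hkL]
      have e1 : (∑ δ : {x // x ∈ J} → Bool, (lamA * ⟪a δ, v L⟫_ℝ) • a δ)
          = ∑ δ : {x // x ∈ J} → Bool, (lamA * τ) • a δ :=
        Finset.sum_congr rfl fun δ _ => by rw [innA_L δ]
      have e2 : (∑ σ : Fin (n - 1) → Bool, (lamB * ⟪b σ, v L⟫_ℝ) • b σ)
          = ∑ σ : Fin (n - 1) → Bool, (lamB * (-(1 / ((n : ℝ) * τ)))) • b σ :=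
        Finset.sum_congr rfl fun σ _ => by rw [innB_L σ]
      rw [e1, e2, sumA_const (lamA * τ), sumB_const (lamB * (-(1 / ((n : ℝ) * τ)))),
        ← add_smul, Z2, one_smul]
  refine ⟨normA, normB, ?_, ?_, ?_, ?_⟩
  · rw [hlamA]
    exact mul_pos (by positivity) (div_pos hn0 hden)
  · rw [hlamB]
    exact mul_pos (by positivity)
      (div_pos (mul_pos (pow_pos hn0 2) (pow_pos hτ0 2)) hden)
  · rw [sumA_const lamA, sumB_const lamB, ← add_smul, Z1, zero_smul]
  · intro x
    have hx : x ∈ Submodule.span ℝ (Set.range v) := by rw [hvspan]; trivial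
    refine Submodule.span_induction ?_ ?_ ?_ ?_ hx
    · rintro y ⟨k, rfl⟩
      exact key k
    · simp
    · intro y z _ _ hy hz
      simp only [inner_add_right, mul_add, add_smul, Finset.sum_add_distrib]
      conv_rhs => rw [← hy, ← hz]
      abel
    · intro c y _ hy
      simp only [real_inner_smul_right]
      conv_rhs => rw [← hy]
      rw [smul_add, Finset.smul_sum, Finset.smul_sum]
      congr 1
      · refine Finset.sum_congr rfl fun δ _ => ?_
        rw [smul_smul]
        congr 1
        ring
      · refine Finset.sum_congr rfl fun σ _ => ?_
        rw [smul_smul]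
        congr 1
        ring
end

section
/- Let n ≥ 2 and 1 ≤ k ≤ n−1, and define ζ(s) := √((2(1 + 2/n − s) − (s²−1))² + 8(1 + 2/n − s)(s²−1)(n−k)/n), μ(s) := (n/(8(k+1)))·(n(s−1)² + 4k(s+1) + 4 + n·ζ(s)), and τ(t) := (k√(t−n) + √((k(t−n)+t−k)·t))/(k(t−n)+t). Then: (i) μ is strictly increasing on [1, 1+2/n] with μ(1) = n and μ(1+2/n) = n+1; and (ii) τ is strictly increasing on [n, n+1] with τ(n) = √((n−k)/n) and τ(n+1) = 1. -/
open scoped BigOperators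


section TauHelpers

variable (N K : ℝ)

private lemma tau_facts (hN : 2 ≤ N) (hK : 1 ≤ K) (hKN : K + 1 ≤ N)
    (t : ℝ) (ht : N ≤ t) :
    0 < K * (t - N) + t ∧ 0 < K * (t - N) + t - K ∧
    (Real.sqrt (t - N)) ^ 2 = t - N ∧
    (Real.sqrt ((K * (t - N) + t - K) * t)) ^ 2 = (K * (t - N) + t - K) * t := by
  have h1 : 0 < K * (t - N) + t := by nlinarith
  have h2 : 0 < K * (t - N) + t - K := by nlinarith
  exact ⟨h1, h2, Real.sq_sqrt (by linarith),
    Real.sq_sqrt (mul_nonneg h2.le (by linarith))⟩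

private lemma tau_quad (hN : 2 ≤ N) (hK : 1 ≤ K) (hKN : K + 1 ≤ N)
    (τ : ℝ → ℝ)
    (hτ : ∀ t, τ t = (K * Real.sqrt (t - N)
        + Real.sqrt ((K * (t - N) + t - K) * t)) / (K * (t - N) + t))
    (t : ℝ) (ht : N ≤ t) :
    (K * (t - N) + t) * (τ t) ^ 2
      - 2 * K * Real.sqrt (t - N) * (τ t) + K - t = 0 := by
  obtain ⟨hD, hDK, hu2, hS2⟩ := tau_facts N K hN hK hKN t ht
  have hx : (K * (t - N) + t) * τ t = K * Real.sqrt (t - N)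
      + Real.sqrt ((K * (t - N) + t - K) * t) := by
    rw [hτ t, mul_comm, div_mul_cancel₀ _ (ne_of_gt hD)]
  have hq : (K * (t - N) + t) * ((K * (t - N) + t) * (τ t) ^ 2
      - 2 * K * Real.sqrt (t - N) * (τ t) + K - t) = 0 := by
    linear_combination ((K * (t - N) + t) * τ t - K * Real.sqrt (t - N)
      + Real.sqrt ((K * (t - N) + t - K) * t)) * hx + hS2 - K ^ 2 * hu2
  exact (mul_eq_zero.1 hq).resolve_left (ne_of_gt hD)

private lemma tau_nonneg (hN : 2 ≤ N) (hK : 1 ≤ K) (hKN : K + 1 ≤ N)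
    (τ : ℝ → ℝ)
    (hτ : ∀ t, τ t = (K * Real.sqrt (t - N)
        + Real.sqrt ((K * (t - N) + t - K) * t)) / (K * (t - N) + t))
    (t : ℝ) (ht : N ≤ t) : 0 ≤ τ t := by
  obtain ⟨hD, hDK, hu2, hS2⟩ := tau_facts N K hN hK hKN t ht
  rw [hτ t]
  have h1 : 0 ≤ K * Real.sqrt (t - N) :=
    mul_nonneg (by linarith) (Real.sqrt_nonneg _)
  have h2 : 0 ≤ Real.sqrt ((K * (t - N) + t - K) * t) := Real.sqrt_nonneg _
  positivity

private lemma tau_lt_one (hN : 2 ≤ N) (hK : 1 ≤ K) (hKN : K + 1 ≤ N)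
    (τ : ℝ → ℝ)
    (hτ : ∀ t, τ t = (K * Real.sqrt (t - N)
        + Real.sqrt ((K * (t - N) + t - K) * t)) / (K * (t - N) + t))
    (t : ℝ) (ht : N ≤ t) (ht1 : t < N + 1) : τ t < 1 := by
  obtain ⟨hD, hDK, hu2, hS2⟩ := tau_facts N K hN hK hKN t ht
  set u := Real.sqrt (t - N) with hu_def
  have hu0 : 0 ≤ u := Real.sqrt_nonneg _
  have hu1 : u < 1 := by
    rw [hu_def, show (1:ℝ) = Real.sqrt 1 by simp]
    exact Real.sqrt_lt_sqrt (by linarith) (by linarith)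
  have hK0 : (0:ℝ) < K := by linarith
  have hvert : 0 < K * (t - N) + t - K * u := by nlinarith [sq_nonneg (u - 1/2)]
  have hsq : 0 < (u - 1) ^ 2 := by nlinarith
  have hident : (K * (t - N) + t - K * u) ^ 2 - (K * (t - N) + t - K) * t
      = K * (K * (t - N) + t) * (u - 1) ^ 2 := by
    linear_combination (K ^ 2 - K * (K * (t - N) + t)) * hu2
  have hpos : 0 < K * (K * (t - N) + t) * (u - 1) ^ 2 :=
    mul_pos (mul_pos hK0 hD) hsq
  have hS : Real.sqrt ((K * (t - N) + t - K) * t) < K * (t - N) + t - K * u := by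
    rw [Real.sqrt_lt' hvert]
    linarith
  rw [hτ t, div_lt_one hD]
  linarith

private lemma tau_rev (hN : 2 ≤ N) (hK : 1 ≤ K) (hKN : K + 1 ≤ N)
    (τ : ℝ → ℝ)
    (hτ : ∀ t, τ t = (K * Real.sqrt (t - N)
        + Real.sqrt ((K * (t - N) + t - K) * t)) / (K * (t - N) + t))
    (t : ℝ) (ht : N ≤ t) (x : ℝ)
    (hx : (K * (t - N) + t) * x ^ 2
      - 2 * K * Real.sqrt (t - N) * x + K - t < 0) :
    x < τ t := by
  obtain ⟨hD, hDK, hu2, hS2⟩ := tau_facts N K hN hK hKN t ht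
  set u := Real.sqrt (t - N) with hu_def
  set S := Real.sqrt ((K * (t - N) + t - K) * t) with hS_def
  have hS0 : 0 ≤ S := Real.sqrt_nonneg _
  have hident : ((K * (t - N) + t) * x - K * u) ^ 2
      = (K * (t - N) + t) * ((K * (t - N) + t) * x ^ 2
        - 2 * K * u * x + K - t) + S ^ 2 := by
    linear_combination K ^ 2 * hu2 - hS2
  have hneg : (K * (t - N) + t) * ((K * (t - N) + t) * x ^ 2
      - 2 * K * u * x + K - t) < 0 := mul_neg_of_pos_of_neg hD hx
  have h1 : ((K * (t - N) + t) * x - K * u) ^ 2 < S ^ 2 := by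
    rw [hident]; linarith
  have h2 : (K * (t - N) + t) * x - K * u < S := by
    nlinarith [le_abs_self ((K * (t - N) + t) * x - K * u),
      sq_abs ((K * (t - N) + t) * x - K * u)]
  rw [hτ t, lt_div_iff₀ hD]
  linarith

end TauHelpers

private lemma tau_main (N K : ℝ) (hN : 2 ≤ N) (hK : 1 ≤ K) (hKN : K + 1 ≤ N)
    (τ : ℝ → ℝ)
    (hτ : ∀ t, τ t = (K * Real.sqrt (t - N)
        + Real.sqrt ((K * (t - N) + t - K) * t)) / (K * (t - N) + t)) :
    StrictMonoOn τ (Set.Icc N (N + 1)) ∧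
    τ N = Real.sqrt ((N - K) / N) ∧ τ (N + 1) = 1 := by
  have hN0 : (0:ℝ) < N := by linarith
  have hK0 : (0:ℝ) < K := by linarith
  refine ⟨?_, ?_, ?_⟩
  · intro t1 ht1 t2 ht2 h12
    obtain ⟨ht1l, ht1r⟩ := ht1
    obtain ⟨ht2l, ht2r⟩ := ht2
    have hq1 := tau_quad N K hN hK hKN τ hτ t1 ht1l
    have hx0 := tau_nonneg N K hN hK hKN τ hτ t1 ht1l
    have hx1 : τ t1 < 1 := tau_lt_one N K hN hK hKN τ hτ t1 ht1l (by linarith)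
    apply tau_rev N K hN hK hKN τ hτ t2 ht2l
    set x := τ t1 with hx_def
    set u1 := Real.sqrt (t1 - N) with hu1_def
    set u2 := Real.sqrt (t2 - N) with hu2_def
    have hu10 : 0 ≤ u1 := Real.sqrt_nonneg _
    have hu20 : 0 ≤ u2 := Real.sqrt_nonneg _
    have hu12 : u1 ^ 2 = t1 - N := Real.sq_sqrt (by linarith)
    have hu22 : u2 ^ 2 = t2 - N := Real.sq_sqrt (by linarith)
    have hu1le : u1 ≤ 1 := by nlinarith
    have hu2le : u2 ≤ 1 := by nlinarith
    have hu2pos : 0 < u2 := Real.sqrt_pos.2 (by linarith)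
    have hdiff : (t2 - t1) / 2 ≤ u2 - u1 := by
      have h : (u2 - u1) * (u2 + u1) = t2 - t1 := by nlinarith
      rw [div_le_iff₀ (by norm_num : (0:ℝ) < 2)]
      nlinarith
    nlinarith [hq1, mul_pos (sub_pos.2 h12)
        (mul_pos (show (0:ℝ) < (K + 1) * x + 1 by nlinarith) (sub_pos.2 hx1)),
      mul_nonneg (mul_nonneg hK0.le hx0)
        (show (0:ℝ) ≤ (u2 - u1) - (t2 - t1) / 2 by linarith)]
  · rw [hτ]
    rw [show N - N = (0:ℝ) by ring, Real.sqrt_zero]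
    rw [show (K * 0 + N - K) * N = (N - K) * N by ring,
      show K * 0 + N = N by ring]
    rw [Real.sqrt_mul (by linarith : (0:ℝ) ≤ N - K) N,
      Real.sqrt_div (by linarith : (0:ℝ) ≤ N - K) N]
    have h2 : Real.sqrt N * Real.sqrt N = N := Real.mul_self_sqrt hN0.le
    have h1 : Real.sqrt N ≠ 0 := by positivity
    field_simp
    linear_combination Real.sqrt (N - K) * h2
  · rw [hτ]
    rw [show N + 1 - N = (1:ℝ) by ring, Real.sqrt_one]
    rw [show (K * 1 + (N + 1) - K) * (N + 1) = (N + 1) ^ 2 by ring]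
    rw [Real.sqrt_sq (by linarith)]
    rw [show K * 1 + (N + 1) = K + (N + 1) by ring]
    field_simp

noncomputable section MuHelpers

private def Wf (N K s : ℝ) : ℝ :=
  (2 * (1 + 2 / N - s) - (s ^ 2 - 1)) ^ 2
    + 8 * (1 + 2 / N - s) * (s ^ 2 - 1) * ((N - K) / N)

private def Lf (N K s : ℝ) : ℝ := N * (s - 1) ^ 2 + 4 * K * (s + 1) + 4

private def cf (N K : ℝ) : ℝ := N / (8 * (K + 1))

private def Qf (N K s : ℝ) : ℝ := K * N ^ 2 / (4 * (K + 1)) * (s + 1) ^ 2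

private lemma W_nonneg (N K : ℝ) (hN : 2 ≤ N) (hK : 1 ≤ K) (hKN : K + 1 ≤ N)
    (s : ℝ) (hs1 : 1 ≤ s) (hs2 : s ≤ 1 + 2 / N) : 0 ≤ Wf N K s := by
  have hN0 : (0:ℝ) < N := by linarith
  have ha : 0 ≤ 1 + 2 / N - s := by linarith
  have hb : 0 ≤ s ^ 2 - 1 := by nlinarith
  have hr : 0 ≤ (N - K) / N := by
    apply div_nonneg (by linarith) hN0.le
  simp only [Wf]
  have := mul_nonneg (mul_nonneg (mul_nonneg (by norm_num : (0:ℝ) ≤ 8) ha) hb) hr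
  nlinarith [sq_nonneg (2 * (1 + 2 / N - s) - (s ^ 2 - 1))]

private lemma identA (N K : ℝ) (hN : 2 ≤ N) (hK : 1 ≤ K) (s : ℝ) :
    (cf N K * Lf N K s) ^ 2 - Qf N K s = (cf N K * N) ^ 2 * Wf N K s := by
  have hN0 : N ≠ 0 := by linarith
  have hK1 : K + 1 ≠ 0 := by linarith
  simp only [cf, Lf, Qf, Wf]
  field_simp
  ring

private lemma identB (N K : ℝ) (hN : 2 ≤ N) (hK : 1 ≤ K) (s : ℝ) :
    N ^ 2 - 2 * cf N K * Lf N K s * N + Qf N K s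
      = N ^ 2 / (4 * (K + 1)) * (K - N) * (s - 1) ^ 2 := by
  have hN0 : N ≠ 0 := by linarith
  have hK1 : K + 1 ≠ 0 := by linarith
  simp only [cf, Lf, Qf]
  field_simp
  ring

private lemma mu_quad (N K : ℝ) (hN : 2 ≤ N) (hK : 1 ≤ K) (hKN : K + 1 ≤ N)
    (ζ μ : ℝ → ℝ) (hζ : ∀ s, ζ s = Real.sqrt (Wf N K s))
    (hμ : ∀ s, μ s = cf N K * (Lf N K s + N * ζ s))
    (s : ℝ) (hs1 : 1 ≤ s) (hs2 : s ≤ 1 + 2 / N) :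
    (μ s) ^ 2 - 2 * cf N K * Lf N K s * (μ s) + Qf N K s = 0 := by
  have hW := W_nonneg N K hN hK hKN s hs1 hs2
  have hz2 : (ζ s) ^ 2 = Wf N K s := by rw [hζ s]; exact Real.sq_sqrt hW
  have hmul : μ s = cf N K * Lf N K s + cf N K * N * ζ s := by rw [hμ s]; ring
  have hA := identA N K hN hK s
  linear_combination (μ s - cf N K * Lf N K s + cf N K * N * ζ s) * hmul
    + (cf N K * N) ^ 2 * hz2 - hA

private lemma mu_ge (N K : ℝ) (hN : 2 ≤ N) (hK : 1 ≤ K) (hKN : K + 1 ≤ N)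
    (ζ μ : ℝ → ℝ) (hζ : ∀ s, ζ s = Real.sqrt (Wf N K s))
    (hμ : ∀ s, μ s = cf N K * (Lf N K s + N * ζ s))
    (s : ℝ) (hs1 : 1 ≤ s) (hs2 : s ≤ 1 + 2 / N) : N ≤ μ s := by
  have hW := W_nonneg N K hN hK hKN s hs1 hs2
  have hz2 : (ζ s) ^ 2 = Wf N K s := by rw [hζ s]; exact Real.sq_sqrt hW
  have hz0 : 0 ≤ ζ s := by rw [hζ s]; exact Real.sqrt_nonneg _
  have hA := identA N K hN hK s
  have hB := identB N K hN hK s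
  have hc0 : 0 < cf N K := by
    simp only [cf]; positivity
  have e1 : (N - cf N K * Lf N K s) ^ 2
      = N ^ 2 / (4 * (K + 1)) * (K - N) * (s - 1) ^ 2 + (cf N K * N * ζ s) ^ 2 := by
    linear_combination hB + hA - (cf N K * N) ^ 2 * hz2
  have hBnp : N ^ 2 / (4 * (K + 1)) * (K - N) * (s - 1) ^ 2 ≤ 0 := by
    apply mul_nonpos_of_nonpos_of_nonneg _ (sq_nonneg _)
    apply mul_nonpos_of_nonneg_of_nonpos _ (by linarith)
    positivity
  have hcz : 0 ≤ cf N K * N * ζ s := by positivity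
  nlinarith [e1, hBnp, hcz, hμ s, sq_nonneg (N - cf N K * Lf N K s + cf N K * N * ζ s)]

private lemma mu_rev (N K : ℝ) (hN : 2 ≤ N) (hK : 1 ≤ K) (hKN : K + 1 ≤ N)
    (ζ μ : ℝ → ℝ) (hζ : ∀ s, ζ s = Real.sqrt (Wf N K s))
    (hμ : ∀ s, μ s = cf N K * (Lf N K s + N * ζ s))
    (s : ℝ) (hs1 : 1 ≤ s) (hs2 : s ≤ 1 + 2 / N) (x : ℝ)
    (hx : x ^ 2 - 2 * cf N K * Lf N K s * x + Qf N K s < 0) : x < μ s := by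
  have hW := W_nonneg N K hN hK hKN s hs1 hs2
  have hz2 : (ζ s) ^ 2 = Wf N K s := by rw [hζ s]; exact Real.sq_sqrt hW
  have hz0 : 0 ≤ ζ s := by rw [hζ s]; exact Real.sqrt_nonneg _
  have hA := identA N K hN hK s
  have hc0 : 0 < cf N K := by simp only [cf]; positivity
  have hcz : 0 ≤ cf N K * N * ζ s := by positivity
  have e1 : (x - cf N K * Lf N K s) ^ 2
      = (x ^ 2 - 2 * cf N K * Lf N K s * x + Qf N K s)
        + (cf N K * N * ζ s) ^ 2 := by
    linear_combination hA - (cf N K * N) ^ 2 * hz2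
  have h1 : (x - cf N K * Lf N K s) ^ 2 < (cf N K * N * ζ s) ^ 2 := by
    rw [e1]; linarith
  have h2 : x - cf N K * Lf N K s < cf N K * N * ζ s := by
    nlinarith [le_abs_self (x - cf N K * Lf N K s),
      sq_abs (x - cf N K * Lf N K s)]
  have hmul : μ s = cf N K * Lf N K s + cf N K * N * ζ s := by rw [hμ s]; ring
  linarith [hmul]

private lemma mu_main (N K : ℝ) (hN : 2 ≤ N) (hK : 1 ≤ K) (hKN : K + 1 ≤ N)
    (ζ μ : ℝ → ℝ) (hζ : ∀ s, ζ s = Real.sqrt (Wf N K s))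
    (hμ : ∀ s, μ s = cf N K * (Lf N K s + N * ζ s)) :
    StrictMonoOn μ (Set.Icc 1 (1 + 2 / N)) ∧
    μ 1 = N ∧ μ (1 + 2 / N) = N + 1 := by
  have hN0 : (0:ℝ) < N := by linarith
  have hK1 : K + 1 ≠ 0 := by linarith
  have hc0 : 0 < cf N K := by simp only [cf]; positivity
  refine ⟨?_, ?_, ?_⟩
  · intro s1 hs1 s2 hs2 h12
    obtain ⟨hs1l, hs1r⟩ := hs1
    obtain ⟨hs2l, hs2r⟩ := hs2
    have hq1 := mu_quad N K hN hK hKN ζ μ hζ hμ s1 hs1l hs1r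
    have hxN := mu_ge N K hN hK hKN ζ μ hζ hμ s1 hs1l hs1r
    apply mu_rev N K hN hK hKN ζ μ hζ hμ s2 hs2l hs2r
    set x := μ s1 with hx_def
    have hLdiff : 0 ≤ Lf N K s2 - Lf N K s1 := by
      simp only [Lf]
      nlinarith [mul_nonneg (by linarith : (0:ℝ) ≤ s2 - s1)
        (by linarith : (0:ℝ) ≤ s1 + s2 - 2)]
    have step1 : 2 * cf N K * (Lf N K s2 - Lf N K s1) * N
        ≤ 2 * cf N K * (Lf N K s2 - Lf N K s1) * x := by
      apply mul_le_mul_of_nonneg_left hxN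
      positivity
    have step2 : 2 * cf N K * (Lf N K s2 - Lf N K s1) * N
        - (Qf N K s2 - Qf N K s1)
        = N ^ 2 / (4 * (K + 1)) * (N - K) * (s2 - s1) * (s1 + s2 - 2) := by
      simp only [cf, Lf, Qf]
      field_simp
      ring
    have hpos : 0 < N ^ 2 / (4 * (K + 1)) * (N - K) * (s2 - s1) * (s1 + s2 - 2) := by
      have h1 : 0 < N ^ 2 / (4 * (K + 1)) := by positivity
      have h2 : 0 < N - K := by linarith
      have h3 : 0 < s2 - s1 := by linarith
      have h4 : 0 < s1 + s2 - 2 := by linarith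
      positivity
    nlinarith [hq1, step1, step2, hpos]
  · have hW1 : Wf N K 1 = (4 / N) ^ 2 := by
      simp only [Wf]; field_simp; ring
    have hz1 : ζ 1 = 4 / N := by
      rw [hζ 1, hW1, Real.sqrt_sq (by positivity)]
    rw [hμ 1, hz1]
    simp only [cf, Lf]
    rw [div_mul_eq_mul_div, div_eq_iff (by positivity : (8:ℝ)*(K+1) ≠ 0)]
    have h4 : N * (4 / N) = 4 := by field_simp
    rw [h4]; ring
  · have hb : (0:ℝ) ≤ (1 + 2 / N) ^ 2 - 1 := by nlinarith [div_pos (by norm_num : (0:ℝ) < 2) hN0]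
    have hW2 : Wf N K (1 + 2 / N) = ((1 + 2 / N) ^ 2 - 1) ^ 2 := by
      simp only [Wf]; field_simp; ring
    have hz2 : ζ (1 + 2 / N) = (1 + 2 / N) ^ 2 - 1 := by
      rw [hζ _, hW2, Real.sqrt_sq hb]
    rw [hμ _, hz2]
    simp only [cf, Lf]
    rw [div_mul_eq_mul_div, div_eq_iff (by positivity : (8:ℝ)*(K+1) ≠ 0)]
    field_simp
    ring

end MuHelpers

/-- monotonicity and boundary values of the auxiliary functions
`μ` and `τ` (Lemma on μ and τ, parts (i) and (ii)). -/
theorem stmt10 (n k : ℕ) (hn : 2 ≤ n) (hk : 1 ≤ k) (hkn : k ≤ n - 1)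
    (ζ μ τ : ℝ → ℝ)
    (hζ : ∀ s, ζ s = Real.sqrt
      ((2 * (1 + 2 / (n : ℝ) - s) - (s ^ 2 - 1)) ^ 2
        + 8 * (1 + 2 / (n : ℝ) - s) * (s ^ 2 - 1) * (((n : ℝ) - k) / n)))
    (hμ : ∀ s, μ s = ((n : ℝ) / (8 * ((k : ℝ) + 1))) *
      ((n : ℝ) * (s - 1) ^ 2 + 4 * (k : ℝ) * (s + 1) + 4 + (n : ℝ) * ζ s))
    (hτ : ∀ t, τ t = ((k : ℝ) * Real.sqrt (t - n)
        + Real.sqrt (((k : ℝ) * (t - n) + t - k) * t)) / ((k : ℝ) * (t - n) + t)) :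
    StrictMonoOn μ (Set.Icc 1 (1 + 2 / (n : ℝ))) ∧
    μ 1 = n ∧ μ (1 + 2 / (n : ℝ)) = (n : ℝ) + 1 ∧
    StrictMonoOn τ (Set.Icc (n : ℝ) ((n : ℝ) + 1)) ∧
    τ (n : ℝ) = Real.sqrt (((n : ℝ) - k) / n) ∧ τ ((n : ℝ) + 1) = 1 := by
  have hN : (2:ℝ) ≤ (n:ℝ) := by exact_mod_cast hn
  have hK : (1:ℝ) ≤ (k:ℝ) := by exact_mod_cast hk
  have hkn' : k + 1 ≤ n := by omega
  have hKN : (k:ℝ) + 1 ≤ (n:ℝ) := by exact_mod_cast hkn'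
  have hζ' : ∀ s, ζ s = Real.sqrt (Wf (n:ℝ) (k:ℝ) s) := by
    intro s; rw [hζ s]; simp only [Wf]
  have hμ' : ∀ s, μ s = cf (n:ℝ) (k:ℝ) * (Lf (n:ℝ) (k:ℝ) s + (n:ℝ) * ζ s) := by
    intro s; rw [hμ s]; simp only [cf, Lf]
  obtain ⟨m1, m2, m3⟩ := mu_main (n:ℝ) (k:ℝ) hN hK hKN ζ μ hζ' hμ'
  obtain ⟨t1, t2, t3⟩ := tau_main (n:ℝ) (k:ℝ) hN hK hKN τ hτ
  exact ⟨m1, m2, m3, t1, t2, t3⟩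
end

section
/- Let n ≥ 2 and 1 ≤ k ≤ n−1, and define ζ(s) := √((2(1 + 2/n − s) − (s²−1))² + 8(1 + 2/n − s)(s²−1)(n−k)/n), μ(s) := (n/(8(k+1)))·(n(s−1)² + 4k(s+1) + 4 + n·ζ(s)), and τ(t) := (k√(t−n) + √((k(t−n)+t−k)·t))/(k(t−n)+t). Then: (i) for every t₀ ∈ [n, n+1], a real number r ≥ 0 satisfies (r√(t₀−n) − 1)² = t₀(1−r²)/k if and only if r = τ(t₀); and (ii) for every s ∈ [1, 1+2/n], one has (s−1)·τ(μ(s)) = (2/n)·√(μ(s) − n). -/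
open scoped BigOperators

set_option maxHeartbeats 2000000 in
/-- the quadratic characterization of `τ` and the compatibility of
`μ` and `τ` (Lemma on μ and τ, parts (iii) and (iv)). -/
theorem stmt11 (n k : ℕ) (hn : 2 ≤ n) (hk : 1 ≤ k) (hkn : k ≤ n - 1)
    (ζ μ τ : ℝ → ℝ)
    (hζ : ∀ s, ζ s = Real.sqrt
      ((2 * (1 + 2 / (n : ℝ) - s) - (s ^ 2 - 1)) ^ 2
        + 8 * (1 + 2 / (n : ℝ) - s) * (s ^ 2 - 1) * (((n : ℝ) - k) / n)))
    (hμ : ∀ s, μ s = ((n : ℝ) / (8 * ((k : ℝ) + 1))) *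
      ((n : ℝ) * (s - 1) ^ 2 + 4 * (k : ℝ) * (s + 1) + 4 + (n : ℝ) * ζ s))
    (hτ : ∀ t, τ t = ((k : ℝ) * Real.sqrt (t - n)
        + Real.sqrt (((k : ℝ) * (t - n) + t - k) * t)) / ((k : ℝ) * (t - n) + t)) :
    (∀ t₀ ∈ Set.Icc (n : ℝ) ((n : ℝ) + 1), ∀ r : ℝ, 0 ≤ r →
      ((r * Real.sqrt (t₀ - n) - 1) ^ 2 = t₀ * (1 - r ^ 2) / k ↔ r = τ t₀)) ∧
    (∀ s ∈ Set.Icc (1 : ℝ) (1 + 2 / (n : ℝ)),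
      (s - 1) * τ (μ s) = (2 / (n : ℝ)) * Real.sqrt (μ s - n)) := by
  have hn2 : (2:ℝ) ≤ (n:ℝ) := by exact_mod_cast hn
  have hn0 : (0:ℝ) < (n:ℝ) := by linarith
  have hk1 : (1:ℝ) ≤ (k:ℝ) := by exact_mod_cast hk
  have hk0 : (0:ℝ) < (k:ℝ) := by linarith
  have hkn1 : (k:ℝ) + 1 ≤ (n:ℝ) := by
    have : k + 1 ≤ n := by omega
    exact_mod_cast this
  have hk10 : (0:ℝ) < (k:ℝ) + 1 := by linarith
  constructor
  · -- part (i)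
    rintro t₀ ⟨ht₀l, ht₀r⟩ r hr
    rw [hτ]
    obtain ⟨x, hxdef⟩ : ∃ x, Real.sqrt (t₀ - n) = x := ⟨_, rfl⟩
    obtain ⟨y, hydef⟩ : ∃ y, Real.sqrt (((k:ℝ) * (t₀ - n) + t₀ - k) * t₀) = y := ⟨_, rfl⟩
    have hx0 : 0 ≤ x := hxdef ▸ Real.sqrt_nonneg _
    have hx2 : x ^ 2 = t₀ - n := by rw [← hxdef]; exact Real.sq_sqrt (by linarith)
    have hE0 : 0 ≤ ((k:ℝ) * (t₀ - n) + t₀ - k) * t₀ :=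
      mul_nonneg (by nlinarith) (by linarith)
    have hy0 : 0 ≤ y := hydef ▸ Real.sqrt_nonneg _
    have hy2 : y ^ 2 = ((k:ℝ) * (t₀ - n) + t₀ - k) * t₀ := by
      rw [← hydef]; exact Real.sq_sqrt hE0
    rw [hxdef, hydef]
    have hD0 : (0:ℝ) < (k:ℝ) * (t₀ - n) + t₀ := by nlinarith
    have hkx : ((k:ℝ) * x)^2 = (k:ℝ)^2 * (t₀ - n) := by rw [mul_pow, hx2]
    have h7 : ((k:ℝ) * x)^2 < y^2 := by
      nlinarith [hkx, hy2, mul_pos hD0 (show (0:ℝ) < t₀ - k by linarith)]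
    have hyx : (k:ℝ) * x < y := by
      nlinarith [h7, hy0, mul_nonneg hk0.le hx0]
    constructor
    · intro heq
      rw [eq_div_iff (ne_of_gt hk0)] at heq
      have hfac : (((k:ℝ) * (t₀ - n) + t₀) * r - ((k:ℝ) * x + y))
          * (((k:ℝ) * (t₀ - n) + t₀) * r - ((k:ℝ) * x - y)) = 0 := by
        linear_combination ((k:ℝ) * (t₀ - n) + t₀) * heq
          + ((k:ℝ)^2 - ((k:ℝ) * (t₀ - n) + t₀) * (k:ℝ) * r^2) * hx2 - hy2
      rcases mul_eq_zero.mp hfac with h | h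
      · rw [eq_div_iff (ne_of_gt hD0)]
        linarith
      · exfalso
        nlinarith [mul_nonneg hD0.le hr]
    · intro hr'
      have hDr : ((k:ℝ) * (t₀ - n) + t₀) * r = (k:ℝ) * x + y := by
        rw [hr', mul_div_cancel₀ _ (ne_of_gt hD0)]
      rw [eq_div_iff (ne_of_gt hk0)]
      have h0' : (r * x - 1) ^ 2 * (k:ℝ) * ((k:ℝ) * (t₀ - n) + t₀)
          = t₀ * (1 - r ^ 2) * ((k:ℝ) * (t₀ - n) + t₀) := by
        linear_combination (((k:ℝ) * (t₀ - n) + t₀) * r - ((k:ℝ) * x - y)) * hDr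
          + (((k:ℝ) * (t₀ - n) + t₀) * (k:ℝ) * r^2 - (k:ℝ)^2) * hx2 + hy2
      have := mul_right_cancel₀ (ne_of_gt hD0) h0'
      linarith
  · -- part (ii)
    rintro s ⟨hs1, hs2⟩
    have hns : (s - 1) * (n:ℝ) ≤ 2 := by
      rw [← le_div_iff₀ hn0]; linarith
    have hu0 : (0:ℝ) ≤ s - 1 := by linarith
    obtain ⟨Z, hZdef⟩ : ∃ Z, ζ s = Z := ⟨_, rfl⟩
    have hZ0 : 0 ≤ Z := by rw [← hZdef, hζ]; exact Real.sqrt_nonneg _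
    have hRnn : 0 ≤ (2 * (1 + 2 / (n : ℝ) - s) - (s ^ 2 - 1)) ^ 2
        + 8 * (1 + 2 / (n : ℝ) - s) * (s ^ 2 - 1) * (((n : ℝ) - k) / n) := by
      have h1 : 0 ≤ 1 + 2 / (n:ℝ) - s := by linarith
      have h2 : 0 ≤ s ^ 2 - 1 := by nlinarith [sq_nonneg (s-1)]
      have h3 : 0 ≤ ((n:ℝ) - k) / n := div_nonneg (by linarith) hn0.le
      have := mul_nonneg (mul_nonneg (mul_nonneg (by norm_num : (0:ℝ) ≤ 8) h1) h2) h3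
      nlinarith [sq_nonneg (2 * (1 + 2 / (n : ℝ) - s) - (s ^ 2 - 1))]
    have hZ2 : Z ^ 2 = (2 * (1 + 2 / (n : ℝ) - s) - (s ^ 2 - 1)) ^ 2
        + 8 * (1 + 2 / (n : ℝ) - s) * (s ^ 2 - 1) * (((n : ℝ) - k) / n) := by
      rw [← hZdef, hζ]; exact Real.sq_sqrt hRnn
    have hid : (n:ℝ)^2 * ((2 * (1 + 2 / (n : ℝ) - s) - (s ^ 2 - 1)) ^ 2
        + 8 * (1 + 2 / (n : ℝ) - s) * (s ^ 2 - 1) * (((n : ℝ) - k) / n))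
        = (4 - 4*(n:ℝ)*(s-1) - (n:ℝ)*(s-1)^2)^2
          + 8*(2 - (n:ℝ)*(s-1))*((s-1)^2 + 2*(s-1))*((n:ℝ) - k) := by
      field_simp
      ring
    have hZ2c : (n:ℝ)^2 * Z^2 = (4 - 4*(n:ℝ)*(s-1) - (n:ℝ)*(s-1)^2)^2
        + 8*(2 - (n:ℝ)*(s-1))*((s-1)^2 + 2*(s-1))*((n:ℝ) - k) := by
      linear_combination (n:ℝ)^2 * hZ2 + hid
    obtain ⟨t, htdef⟩ : ∃ t, μ s = t := ⟨_, rfl⟩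
    rw [htdef]
    have ht : 8*((k:ℝ)+1)*t
        = (n:ℝ)*((n:ℝ)*(s-1)^2 + 4*(k:ℝ)*(s-1) + 8*(k:ℝ) + 4 + (n:ℝ)*Z) := by
      rw [← htdef, hμ, hZdef]
      have e : ((n:ℝ)/(8*((k:ℝ)+1))) * (8*((k:ℝ)+1)) = (n:ℝ) :=
        div_mul_cancel₀ _ (by positivity)
      linear_combination ((n:ℝ)*(s-1)^2 + 4*(k:ℝ)*(s+1) + 4 + (n:ℝ)*Z) * e
    have hC : ((n:ℝ)*Z)^2 - (4 - (n:ℝ)*(s-1)^2 - 4*(k:ℝ)*(s-1))^2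
        = 16*(s-1)^2*((n:ℝ)-k)*((k:ℝ)+1) := by
      linear_combination hZ2c
    have hZC : 4 - (n:ℝ)*(s-1)^2 - 4*(k:ℝ)*(s-1) ≤ (n:ℝ)*Z := by
      nlinarith [hC, mul_nonneg hn0.le hZ0,
        mul_nonneg (mul_nonneg (sq_nonneg (s-1)) (by linarith : (0:ℝ) ≤ (n:ℝ)-k)) hk10.le]
    have h5 : 0 ≤ (n:ℝ)*(s-1)^2 + 4*(k:ℝ)*(s-1) - 4 + (n:ℝ)*Z := by linarith
    have ha0 : 0 ≤ t - (n:ℝ) := by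
      nlinarith [ht, mul_nonneg hn0.le h5]
    have htn : (n:ℝ) ≤ t := by linarith
    rw [hτ]
    obtain ⟨x, hxdef⟩ : ∃ x, Real.sqrt (t - n) = x := ⟨_, rfl⟩
    obtain ⟨y, hydef⟩ : ∃ y, Real.sqrt (((k:ℝ) * (t - n) + t - k) * t) = y := ⟨_, rfl⟩
    have hx0 : 0 ≤ x := hxdef ▸ Real.sqrt_nonneg _
    have hx2 : x ^ 2 = t - n := by rw [← hxdef]; exact Real.sq_sqrt ha0
    have hE0 : 0 ≤ ((k:ℝ) * (t - n) + t - k) * t :=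
      mul_nonneg (by nlinarith) (by linarith)
    have hy0 : 0 ≤ y := hydef ▸ Real.sqrt_nonneg _
    have hy2 : y ^ 2 = ((k:ℝ) * (t - n) + t - k) * t := by
      rw [← hydef]; exact Real.sq_sqrt hE0
    rw [hxdef, hydef]
    have hD0 : (0:ℝ) < (k:ℝ) * (t - n) + t := by nlinarith
    have hc0 : 0 ≤ 2*((k:ℝ)*(t-n)+t) - (n:ℝ)*(k:ℝ)*(s-1) := by
      nlinarith [mul_le_mul_of_nonneg_left hns hk0.le]
    have key' : (s-1)^2*((((k:ℝ)*(t-n)+t-k)*t))*(n:ℝ)^2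
        = (t-n)*(2*((k:ℝ)*(t-n)+t) - (n:ℝ)*(k:ℝ)*(s-1))^2 := by
      have key : ((k:ℝ)+1) * ((s-1)^2*((((k:ℝ)*(t-n)+t-k)*t))*(n:ℝ)^2)
          = ((k:ℝ)+1) * ((t-n)*(2*((k:ℝ)*(t-n)+t) - (n:ℝ)*(k:ℝ)*(s-1))^2) := by
        linear_combination
          ((-1/2*((k:ℝ)+1)^2*t^2) + (-3/4*(n:ℝ)*((k:ℝ)+1)*t) + (-1/4*(n:ℝ)*((k:ℝ)+1)*(s-1)*t) + (1*(n:ℝ)*((k:ℝ)+1)^2*t) + (1/4*(n:ℝ)*((k:ℝ)+1)^2*(s-1)*t) + (-1/8*(n:ℝ)^2) + (1/8*(n:ℝ)^2*(s-1)^2) + (3/4*(n:ℝ)^2*((k:ℝ)+1)) + (-1/16*(n:ℝ)^2*((k:ℝ)+1)*Z*t) + (1/4*(n:ℝ)^2*((k:ℝ)+1)*(s-1)) + (-1/8*(n:ℝ)^2*((k:ℝ)+1)*(s-1)^2) + (1/16*(n:ℝ)^2*((k:ℝ)+1)*(s-1)^2*t) + (-1/2*(n:ℝ)^2*((k:ℝ)+1)^2)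 + (-1/4*(n:ℝ)^2*((k:ℝ)+1)^2*(s-1)) + (-1/16*(n:ℝ)^3*Z) + (-1/16*(n:ℝ)^3*(s-1)^3) + (1/16*(n:ℝ)^3*((k:ℝ)+1)*Z) + (1/16*(n:ℝ)^3*((k:ℝ)+1)*(s-1)^2) + (1/16*(n:ℝ)^3*((k:ℝ)+1)*(s-1)^3) + (-1/128*(n:ℝ)^4*Z^2) + (1/128*(n:ℝ)^4*(s-1)^4)) * ht
          + ((-1/32*(n:ℝ)^3) + (1/32*(n:ℝ)^3*(s-1)) + (-1/32*(n:ℝ)^3*((k:ℝ)+1)*(s-1)) + (-1/128*(n:ℝ)^4*Z) + (-1/128*(n:ℝ)^4*(s-1)^2)) * hZ2c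
      exact mul_left_cancel₀ (ne_of_gt hk10) key
    have h1 : ((s-1)*y*(n:ℝ))^2
        = ((2*((k:ℝ)*(t-n)+t) - (n:ℝ)*(k:ℝ)*(s-1))*x)^2 := by
      linear_combination key' + (s-1)^2*(n:ℝ)^2*hy2
        - (2*((k:ℝ)*(t-n)+t) - (n:ℝ)*(k:ℝ)*(s-1))^2*hx2
    have hsub : (s-1)*y*(n:ℝ) = (2*((k:ℝ)*(t-n)+t) - (n:ℝ)*(k:ℝ)*(s-1))*x := by
      have h2 : 0 ≤ (s-1)*y*(n:ℝ) := mul_nonneg (mul_nonneg hu0 hy0) hn0.le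
      have h3 : 0 ≤ (2*((k:ℝ)*(t-n)+t) - (n:ℝ)*(k:ℝ)*(s-1))*x := mul_nonneg hc0 hx0
      calc (s-1)*y*(n:ℝ) = Real.sqrt (((s-1)*y*(n:ℝ))^2) := (Real.sqrt_sq h2).symm
        _ = Real.sqrt (((2*((k:ℝ)*(t-n)+t) - (n:ℝ)*(k:ℝ)*(s-1))*x)^2) := by rw [h1]
        _ = (2*((k:ℝ)*(t-n)+t) - (n:ℝ)*(k:ℝ)*(s-1))*x := Real.sqrt_sq h3
    rw [div_mul_eq_mul_div, mul_div_assoc', div_eq_div_iff (ne_of_gt hD0) (ne_of_gt hn0)]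
    linear_combination hsub
end

section
/- Let n ≥ 1 and let K ⊆ ℝⁿ be a convex body with Bⁿ ⊆ K admitting a John decomposition u¹,…,uᵐ, λ₁,…,λₘ with every uᵢ ∈ K and ⟨x,uᵢ⟩ ≤ 1 for all x ∈ K and all i (i.e., Bⁿ is the John ellipsoid of K). Then any x, y ∈ K satisfy ‖x − y‖ ≤ √(2n(n+1)), with equality if and only if ‖x‖ = ‖y‖ = n and x ≠ y. -/
open scoped InnerProductSpace BigOperators

/-- the diameter bound `√(2n(n+1))` for a convex body in John
position, with equality characterization. -/
theorem stmt15 (n : ℕ) (hn : 1 ≤ n)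
    (K : Set (EuclideanSpace ℝ (Fin n)))
    (hKcompact : IsCompact K) (hKconv : Convex ℝ K) (hKint : (interior K).Nonempty)
    (hBK : Metric.closedBall 0 1 ⊆ K)
    (m : ℕ) (u : Fin m → EuclideanSpace ℝ (Fin n)) (lam : Fin m → ℝ)
    (hu : ∀ i, ‖u i‖ = 1) (hlam : ∀ i, 0 < lam i)
    (huK : ∀ i, u i ∈ K)
    (hsum : ∑ i, lam i • u i = 0)
    (hdecomp : ∀ z : EuclideanSpace ℝ (Fin n), ∑ i, (lam i * ⟪u i, z⟫_ℝ) • u i = z)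
    (hsupp : ∀ x ∈ K, ∀ i, ⟪x, u i⟫_ℝ ≤ 1)
    (x y : EuclideanSpace ℝ (Fin n)) (hx : x ∈ K) (hy : y ∈ K) :
    ‖x - y‖ ≤ Real.sqrt (2 * n * ((n : ℝ) + 1)) ∧
    (‖x - y‖ = Real.sqrt (2 * n * ((n : ℝ) + 1)) ↔
      ‖x‖ = (n : ℝ) ∧ ‖y‖ = (n : ℝ) ∧ x ≠ y) := by
  classical
  have hN1 : (1:ℝ) ≤ (n:ℝ) := by exact_mod_cast hn
  -- ∑ λᵢ ⟪uᵢ, z⟫ = 0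
  have hzero : ∀ z : EuclideanSpace ℝ (Fin n), ∑ i, lam i * ⟪u i, z⟫_ℝ = 0 := by
    intro z
    have h := congrArg (fun w : EuclideanSpace ℝ (Fin n) => ⟪w, z⟫_ℝ) hsum
    simp only [sum_inner, real_inner_smul_left, inner_zero_left] at h
    exact h
  -- ‖z‖² = ∑ λᵢ ⟪uᵢ, z⟫²
  have hnormsq : ∀ z : EuclideanSpace ℝ (Fin n),
      ‖z‖ ^ 2 = ∑ i, lam i * ⟪u i, z⟫_ℝ ^ 2 := by
    intro z
    have h := congrArg (fun w : EuclideanSpace ℝ (Fin n) => ⟪w, z⟫_ℝ) (hdecomp z)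
    simp only [sum_inner, real_inner_smul_left, real_inner_self_eq_norm_sq] at h
    rw [← h]
    exact Finset.sum_congr rfl fun i _ => by ring
  -- ∑ λᵢ = n
  have hsumlam : ∑ i, lam i = (n : ℝ) := by
    have h1 : ∀ j : Fin n, ∑ i, lam i * (u i j) ^ 2 = 1 := by
      intro j
      have h := hnormsq (EuclideanSpace.single j (1:ℝ))
      simp only [EuclideanSpace.inner_single_right, map_one, one_mul,
        EuclideanSpace.norm_single, norm_one, one_pow, RCLike.star_def, starRingEnd_apply,
        star_trivial] at h
      exact h.symm
    have h2 : ∀ i, ∑ j, (u i j) ^ 2 = 1 := by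
      intro i
      have h := real_inner_self_eq_norm_sq (u i)
      rw [PiLp.inner_apply] at h
      simp only [RCLike.inner_apply, starRingEnd_apply, star_trivial, hu i, one_pow] at h
      rw [← h]
      exact Finset.sum_congr rfl fun j _ => by ring
    calc ∑ i, lam i = ∑ i, lam i * ∑ j, (u i j) ^ 2 := by
          refine Finset.sum_congr rfl fun i _ => ?_
          rw [h2 i, mul_one]
      _ = ∑ j, ∑ i, lam i * (u i j) ^ 2 := by
          rw [Finset.sum_comm]
          exact Finset.sum_congr rfl fun i _ => by rw [Finset.mul_sum]
      _ = ∑ j : Fin n, (1:ℝ) := Finset.sum_congr rfl fun j _ => h1 j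
      _ = (n : ℝ) := by simp
  -- sum identity used twice
  have hSeq : ∀ w : EuclideanSpace ℝ (Fin n), ∀ t : ℝ,
      ∑ i, lam i * ((1 - ⟪u i, w⟫_ℝ) * (t + ⟪u i, w⟫_ℝ))
        = (n : ℝ) * t + (1 - t) * (∑ i, lam i * ⟪u i, w⟫_ℝ) - ‖w‖ ^ 2 := by
    intro w t
    rw [hnormsq w, ← hsumlam, Finset.sum_mul, Finset.mul_sum, ← Finset.sum_add_distrib,
      ← Finset.sum_sub_distrib]
    exact Finset.sum_congr rfl fun i _ => by ring
  have hip : ∀ w ∈ K, ∀ i : Fin m, ⟪u i, w⟫_ℝ ≤ 1 := by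
    intro w hw i
    rw [real_inner_comm]; exact hsupp w hw i
  have hlow : ∀ w : EuclideanSpace ℝ (Fin n), ∀ i : Fin m, -‖w‖ ≤ ⟪u i, w⟫_ℝ := by
    intro w i
    have h := abs_real_inner_le_norm (u i) w
    rw [hu i, one_mul] at h
    linarith [(abs_le.mp h).1]
  -- norm bound
  have keyle : ∀ w ∈ K, ‖w‖ ≤ (n : ℝ) := by
    intro w hw
    have hS : (0:ℝ) ≤ ∑ i, lam i * ((1 - ⟪u i, w⟫_ℝ) * (‖w‖ + ⟪u i, w⟫_ℝ)) :=
      Finset.sum_nonneg fun i _ => mul_nonneg (hlam i).le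
        (mul_nonneg (by linarith [hip w hw i]) (by linarith [hlow w i]))
    rw [hSeq w ‖w‖, hzero w, mul_zero, add_zero] at hS
    nlinarith [norm_nonneg w, sq_nonneg (‖w‖ - (n:ℝ))]
  -- equality characterization of the norm bound
  have hchar : ∀ w ∈ K, ‖w‖ = (n : ℝ) → ∀ i : Fin m,
      ⟪u i, w⟫_ℝ = 1 ∨ w = -((n : ℝ) • u i) := by
    intro w hw hwn i
    have hS : ∑ i, lam i * ((1 - ⟪u i, w⟫_ℝ) * ((n:ℝ) + ⟪u i, w⟫_ℝ)) = 0 := by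
      rw [hSeq w (n:ℝ), hzero w, mul_zero, add_zero, hwn]; ring
    have hterm : lam i * ((1 - ⟪u i, w⟫_ℝ) * ((n:ℝ) + ⟪u i, w⟫_ℝ)) = 0 := by
      have := (Finset.sum_eq_zero_iff_of_nonneg (fun j _ =>
        mul_nonneg (hlam j).le (mul_nonneg (by linarith [hip w hw j])
          (by have := hlow w j; rw [hwn] at this; linarith)))).mp hS i (Finset.mem_univ i)
      exact this
    have h2 : (1 - ⟪u i, w⟫_ℝ) * ((n:ℝ) + ⟪u i, w⟫_ℝ) = 0 := by
      rcases mul_eq_zero.mp hterm with h | h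
      · exact absurd h (hlam i).ne'
      · exact h
    rcases mul_eq_zero.mp h2 with h | h
    · left; linarith
    · right
      have hiw : ⟪u i, w⟫_ℝ = -(n:ℝ) := by linarith
      have hz : ‖w + (n:ℝ) • u i‖ ^ 2 = 0 := by
        rw [norm_add_sq_real, real_inner_smul_right, real_inner_comm, hiw, norm_smul,
          hu i, hwn]
        rw [Real.norm_eq_abs, abs_of_nonneg (by linarith : (0:ℝ) ≤ (n:ℝ))]
        ring
      have hz2 : w + (n:ℝ) • u i = 0 := by
        have h0 := (pow_eq_zero_iff (two_ne_zero)).mp hz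
        exact norm_eq_zero.mp h0
      exact eq_neg_of_add_eq_zero_left hz2
  -- nonnegativity of T
  have hT0 : (0:ℝ) ≤ ∑ i, lam i * ((1 - ⟪u i, x⟫_ℝ) * (1 - ⟪u i, y⟫_ℝ)) :=
    Finset.sum_nonneg fun i _ => mul_nonneg (hlam i).le
      (mul_nonneg (by linarith [hip x hx i]) (by linarith [hip y hy i]))
  -- main identity
  have hD2 : ‖x - y‖ ^ 2 = ‖x‖ ^ 2 + ‖y‖ ^ 2 + 2 * (n:ℝ)
      - 2 * ∑ i, lam i * ((1 - ⟪u i, x⟫_ℝ) * (1 - ⟪u i, y⟫_ℝ)) := by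
    have hkey : ∑ i, lam i * (⟪u i, x⟫_ℝ - ⟪u i, y⟫_ℝ) ^ 2
        = (∑ i, lam i * ⟪u i, x⟫_ℝ ^ 2) + (∑ i, lam i * ⟪u i, y⟫_ℝ ^ 2)
          + 2 * (∑ i, lam i)
          - 2 * (∑ i, lam i * ((1 - ⟪u i, x⟫_ℝ) * (1 - ⟪u i, y⟫_ℝ)))
          - 2 * (∑ i, lam i * ⟪u i, x⟫_ℝ) - 2 * (∑ i, lam i * ⟪u i, y⟫_ℝ) := by
      simp only [Finset.mul_sum, ← Finset.sum_add_distrib, ← Finset.sum_sub_distrib]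
      exact Finset.sum_congr rfl fun i _ => by ring
    calc ‖x - y‖ ^ 2 = ∑ i, lam i * (⟪u i, x⟫_ℝ - ⟪u i, y⟫_ℝ) ^ 2 := by
          rw [hnormsq (x - y)]
          exact Finset.sum_congr rfl fun i _ => by rw [inner_sub_right]
      _ = _ := by rw [hkey, ← hnormsq x, ← hnormsq y, hsumlam, hzero x, hzero y]; ring
  have hxn := keyle x hx
  have hyn := keyle y hy
  have hbound : ‖x - y‖ ^ 2 ≤ 2 * (n:ℝ) * ((n:ℝ) + 1) := by
    nlinarith [hD2, hT0, hxn, hyn, norm_nonneg x, norm_nonneg y]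
  have hcnn : (0:ℝ) ≤ 2 * (n:ℝ) * ((n:ℝ) + 1) := by positivity
  constructor
  · have h := Real.sqrt_le_sqrt hbound
    rwa [Real.sqrt_sq (norm_nonneg _)] at h
  constructor
  · intro heq
    have hD2e : ‖x - y‖ ^ 2 = 2 * (n:ℝ) * ((n:ℝ) + 1) := by
      rw [heq, Real.sq_sqrt hcnn]
    have hxe : ‖x‖ = (n:ℝ) := by
      refine le_antisymm hxn ?_
      nlinarith [hD2, hD2e, hT0, hyn, norm_nonneg x, norm_nonneg y]
    have hye : ‖y‖ = (n:ℝ) := by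
      refine le_antisymm hyn ?_
      nlinarith [hD2, hD2e, hT0, hxn, norm_nonneg x, norm_nonneg y]
    refine ⟨hxe, hye, fun hcontra => ?_⟩
    rw [hcontra, sub_self, norm_zero] at hD2e
    nlinarith [hN1]
  · rintro ⟨hxe, hye, hne⟩
    have hT : ∑ i, lam i * ((1 - ⟪u i, x⟫_ℝ) * (1 - ⟪u i, y⟫_ℝ)) = 0 := by
      apply Finset.sum_eq_zero
      intro i _
      rcases hchar x hx hxe i with h1 | h1
      · rw [h1]; ring
      rcases hchar y hy hye i with h2 | h2
      · rw [h2]; ring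
      · exact absurd (h1.trans h2.symm) hne
    have hsq : ‖x - y‖ ^ 2 = 2 * (n:ℝ) * ((n:ℝ) + 1) := by
      rw [hD2, hT, hxe, hye]; ring
    rw [← Real.sqrt_sq (norm_nonneg (x - y)), hsq]
end

section
/- Let s ∈ (1,2), set γ := √(4(2−s)² + (s²−1)²) and ξ* := √((s² + 1 + γ)/2), and define f(ξ) := ξ² + (2−s)²/(ξ² − s²) for ξ > s. Then: (i) s < ξ* < √(2s); (ii) f(ξ*) = s² + γ; and (iii) for every ξ ∈ [ξ*, √(2s)] with ξ ≠ ξ*, one has f(ξ) < f(ξ*). In particular, f attains its unique maximum on [ξ*, √(2s)] at ξ*. -/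
/-!
Write `t = ξ²`, so that `f` becomes `g(t) = t + c / (t - a)` with `a = s²`, `c = (2 - s)²`.
The difference quotient of `g` is `1 - c / ((t - a)(u - a))`, so `g` strictly decreases between
two points `u < t` as soon as `(t - a)(u - a) < c`. The point `u = ξ*²` is chosen so that
`(u - a)(s² + γ - u) = c`, which gives `f(ξ*) = s² + γ`; for `t ≤ 2s` one has
`(t - a)(u - a) ≤ (2s - s²)(u - a)`, and the defining identity of `γ` makes this `< c`.
-/

open Real

lemma add_div_sub_lt_add_div_sub {a c u t : ℝ} (hu : a < u) (hut : u < t)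
    (h : (t - a) * (u - a) < c) : t + c / (t - a) < u + c / (u - a) := by
  have hta : 0 < t - a := by linarith
  have hua : 0 < u - a := by linarith
  have hdiff : t + c / (t - a) - (u + c / (u - a)) =
      (t - u) * ((t - a) * (u - a) - c) / ((t - a) * (u - a)) := by
    field_simp
    ring
  rw [← sub_neg, hdiff]
  exact div_neg_of_neg_of_pos (mul_neg_of_pos_of_neg (by linarith) (by linarith)) (by positivity)

lemma sq_sub_one_lt_of_sq_eq {s γ : ℝ} (hγ : 0 ≤ γ)
    (hγ2 : γ ^ 2 = 4 * (2 - s) ^ 2 + (s ^ 2 - 1) ^ 2) (hs2 : s < 2) : s ^ 2 - 1 < γ := by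
  nlinarith [sq_nonneg (γ + s ^ 2 - 1)]

-- Squaring reduces this to `0 < 2 (s - 1)² (s + 1)`.
lemma mul_sub_sq_add_one_lt_of_sq_eq {s γ : ℝ}
    (hγ2 : γ ^ 2 = 4 * (2 - s) ^ 2 + (s ^ 2 - 1) ^ 2) (hs1 : 1 < s) (hs2 : s < 2) :
    s * (γ - s ^ 2 + 1) < 2 * (2 - s) := by
  have hR : 0 < 2 * (2 - s) + s * (s ^ 2 - 1) := by nlinarith
  have hsq : (s * γ) ^ 2 < (2 * (2 - s) + s * (s ^ 2 - 1)) ^ 2 := by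
    nlinarith [mul_pos (mul_pos (show 0 < 2 - s by linarith)
      (pow_pos (show 0 < s - 1 by linarith) 2)) (show 0 < s + 1 by linarith)]
  nlinarith

/-- the technical planar lemma on the function
`f(ξ) = ξ² + (2−s)²/(ξ² − s²)` and its unique maximum at `ξ*`. -/
theorem stmt16 (s : ℝ) (hs1 : 1 < s) (hs2 : s < 2)
    (γ ξstar : ℝ)
    (hγ : γ = Real.sqrt (4 * (2 - s) ^ 2 + (s ^ 2 - 1) ^ 2))
    (hξ : ξstar = Real.sqrt ((s ^ 2 + 1 + γ) / 2))
    (f : ℝ → ℝ) (hf : ∀ ξ, f ξ = ξ ^ 2 + (2 - s) ^ 2 / (ξ ^ 2 - s ^ 2)) :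
    (s < ξstar ∧ ξstar < Real.sqrt (2 * s)) ∧
    f ξstar = s ^ 2 + γ ∧
    (∀ ξ ∈ Set.Icc ξstar (Real.sqrt (2 * s)), ξ ≠ ξstar → f ξ < f ξstar) := by
  have hs0 : 0 < s := by linarith
  have hγ0 : 0 ≤ γ := hγ ▸ sqrt_nonneg _
  have hγ2 : γ ^ 2 = 4 * (2 - s) ^ 2 + (s ^ 2 - 1) ^ 2 := hγ ▸ sq_sqrt (by positivity)
  have hγlo := sq_sub_one_lt_of_sq_eq hγ0 hγ2 hs2
  have hγhi := mul_sub_sq_add_one_lt_of_sq_eq hγ2 hs1 hs2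
  have hξ2 : ξstar ^ 2 = (s ^ 2 + 1 + γ) / 2 := hξ ▸ sq_sqrt (by nlinarith)
  have hξ0 : 0 ≤ ξstar := hξ ▸ sqrt_nonneg _
  have hξs : s ^ 2 < ξstar ^ 2 := by linarith
  have hfξ : f ξstar = s ^ 2 + γ := by
    have hquot : (2 - s) ^ 2 / (ξstar ^ 2 - s ^ 2) = (γ + s ^ 2 - 1) / 2 := by
      rw [div_eq_iff (by linarith), hξ2]
      linear_combination (-1 / 4 : ℝ) * hγ2
    rw [hf, hquot, hξ2]
    ring
  refine ⟨⟨?_, ?_⟩, hfξ, ?_⟩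
  · exact hξ ▸ (lt_sqrt hs0.le).2 (by linarith)
  · exact hξ ▸ sqrt_lt_sqrt (by nlinarith) (by nlinarith)
  rintro ξ ⟨hlo, hhi⟩ hne
  have hξ2s : ξ ^ 2 ≤ 2 * s := (le_sqrt (hξ0.trans hlo) (by linarith)).1 hhi
  have hlt : ξstar ^ 2 < ξ ^ 2 := pow_lt_pow_left₀ (hlo.lt_of_ne hne.symm) hξ0 two_ne_zero
  have hprod : (ξ ^ 2 - s ^ 2) * (ξstar ^ 2 - s ^ 2) < (2 - s) ^ 2 := by
    calc (ξ ^ 2 - s ^ 2) * (ξstar ^ 2 - s ^ 2)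
        ≤ (2 * s - s ^ 2) * (ξstar ^ 2 - s ^ 2) := by gcongr
      _ = (2 - s) * (s * (γ - s ^ 2 + 1)) / 2 := by rw [hξ2]; ring
      _ < (2 - s) ^ 2 := by nlinarith
  rw [hf, hf]
  exact add_div_sub_lt_add_div_sub hξs (by linarith) hprod
end

section
/- Let U ⊆ ℝⁿ be a linear subspace, let c ∈ U^⊥, and let α, μ > 1. Define the affine map A : ℝⁿ → ℝⁿ by A(x) = P_U(x) + α·(P_{U^⊥}(x) − c) + c, where P_U and P_{U^⊥} denote the orthogonal projections onto U and U^⊥, and set C := A(conv((μ·(Bⁿ ∩ U) + c) ∪ Bⁿ)), the image under A of the convex hull of (μ·(Bⁿ ∩ U) + c) ∪ Bⁿ. Then Bⁿ ⊆ C, and every point x ∈ Bⁿ lying on the boundary of C satisfies ⟨c, x⟩ > 0. -/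
open scoped InnerProductSpace
open Metric Set Filter Topology

/-!
The inverse of `A` is the stretch with factor `α⁻¹`, which sends `x` to
`x + t • (P_U x + c - x)` with `t = 1 - α⁻¹ ∈ (0, 1)`. For `x` in the ball this is a point of the
segment from `x` to `P_U x + c`, and `P_U x + c` lies in the dilated translated disk; hence
`A⁻¹ x` lies in the hull. If moreover `⟪c, x⟫ ≤ 0`, then `⟪x, P_U x + c⟫ < 1` unless `x` is a unit
vector of `U`, so the segment immediately enters the open ball and `A⁻¹ x` is an interior point.
For a unit vector `x ∈ U` the point `P_U x + c = x + c` is replaced by `r • x + c` with `r > 1`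
slightly. As `A` is a homeomorphism, `x` is then interior to `C`, not on its frontier.
-/

variable {E : Type*} [NormedAddCommGroup E] [InnerProductSpace ℝ E]

lemma eventually_norm_add_smul_sub_lt_one {x p : E} (hx : ‖x‖ ≤ 1) (hxp : ⟪x, p⟫_ℝ < 1) :
    ∀ᶠ s in 𝓝[>] (0 : ℝ), ‖x + s • (p - x)‖ < 1 := by
  have hε : 0 < min (1 / 2) ((1 - ⟪x, p⟫_ℝ) / (‖p - x‖ ^ 2 + 1)) :=
    lt_min (by norm_num) (div_pos (by linarith) (by positivity))
  filter_upwards [self_mem_nhdsWithin, nhdsWithin_le_nhds (eventually_lt_nhds hε)]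
    with s (hs : 0 < s) hsε
  have hs_half : s ≤ 1 / 2 := (hsε.trans_le (min_le_left _ _)).le
  have hs_dist : s * (‖p - x‖ ^ 2 + 1) < 1 - ⟪x, p⟫_ℝ :=
    (lt_div_iff₀ (by positivity)).mp (hsε.trans_le (min_le_right _ _))
  have hx2 : ‖x‖ ^ 2 ≤ 1 := pow_le_one₀ (norm_nonneg x) hx
  have hexpand : ‖x + s • (p - x)‖ ^ 2
      = ‖x‖ ^ 2 + 2 * s * (⟪x, p⟫_ℝ - ‖x‖ ^ 2) + s ^ 2 * ‖p - x‖ ^ 2 := by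
    rw [norm_add_sq_real, inner_smul_right, inner_sub_right, real_inner_self_eq_norm_sq,
      norm_smul, mul_pow, Real.norm_eq_abs, sq_abs]
    ring
  rw [← sq_lt_one_iff₀ (norm_nonneg _), hexpand]
  nlinarith [mul_nonneg (sub_nonneg.mpr hx2) (by linarith : (0 : ℝ) ≤ 1 - 2 * s),
    mul_lt_mul_of_pos_left hs_dist hs]

lemma Convex.add_smul_sub_mem_interior_of_inner_lt_one {K : Set E} (hK : Convex ℝ K)
    (hB : closedBall (0 : E) 1 ⊆ K) {x p : E} (hp : p ∈ K) (hx : ‖x‖ ≤ 1)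
    (hxp : ⟪x, p⟫_ℝ < 1) {τ : ℝ} (hτ : τ ∈ Ioo (0 : ℝ) 1) : x + τ • (p - x) ∈ interior K := by
  obtain ⟨s, hw, hs⟩ :=
    ((eventually_norm_add_smul_sub_lt_one hx hxp).and (Ioo_mem_nhdsGT hτ.1)).exists
  have hw_int : x + s • (p - x) ∈ interior K :=
    interior_maximal (ball_subset_closedBall.trans hB) isOpen_ball (mem_ball_zero_iff.mpr hw)
  have hs1 : 1 - s ≠ 0 := by linarith [hs.2, hτ.2]
  have key := hK.add_smul_sub_mem_interior hp hw_int (t := (1 - τ) / (1 - s))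
    ⟨div_pos (by linarith [hτ.2]) (by linarith [hs.2, hτ.2]),
      (div_le_one (by linarith [hs.2, hτ.2])).mpr (by linarith [hs.2])⟩
  convert key using 1
  match_scalars <;> field_simp <;> ring

/-- With `1 < r` and `t * r < 1`, `x + t • c = (1 - t) • (κ • x) + t • (r • x + c)` with
`κ = (1 - t * r) / (1 - t) ∈ (0, 1)`, a combination of an open-ball point and a point of `K`. -/
lemma Convex.add_smul_mem_interior_of_mem_submodule {K : Set E} (hK : Convex ℝ K)
    (hB : closedBall (0 : E) 1 ⊆ K) {U : Submodule ℝ E} {c : E} {μ : ℝ} (hμ : 1 < μ)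
    (hUc : ∀ u ∈ U, ‖u‖ ≤ μ → u + c ∈ K) {x : E} (hxU : x ∈ U) (hx : ‖x‖ ≤ 1)
    {t : ℝ} (ht : t ∈ Ioo (0 : ℝ) 1) : x + t • c ∈ interior K := by
  obtain ⟨r, hr1, hr⟩ := exists_between (lt_min hμ ((one_lt_inv₀ ht.1).mpr ht.2))
  have hrμ : r ≤ μ := (hr.trans_le (min_le_left _ _)).le
  have htr : t * r < 1 := by
    simpa [ht.1.ne'] using mul_lt_mul_of_pos_left (hr.trans_le (min_le_right _ _)) ht.1
  set κ := (1 - t * r) / (1 - t)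
  have hκ0 : 0 < κ := div_pos (by linarith) (by linarith [ht.2])
  have hκ1 : κ < 1 := (div_lt_one (by linarith [ht.2])).mpr (by nlinarith [ht.1])
  have hz : κ • x ∈ interior K := by
    refine interior_maximal (ball_subset_closedBall.trans hB) isOpen_ball
      (mem_ball_zero_iff.mpr ?_)
    rw [norm_smul, Real.norm_of_nonneg hκ0.le]
    nlinarith [norm_nonneg x]
  have hp : r • x + c ∈ K := by
    refine hUc _ (U.smul_mem r hxU) ?_
    rw [norm_smul, Real.norm_of_nonneg (by linarith)]
    nlinarith [norm_nonneg x]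
  have key := hK.add_smul_sub_mem_interior hp hz (t := 1 - t)
    ⟨by linarith [ht.2], by linarith [ht.1]⟩
  convert key using 1
  have hκ : (1 - t) * κ = 1 - t * r := mul_div_cancel₀ _ (by linarith [ht.2])
  match_scalars
  · linear_combination -hκ
  · ring

lemma Convex.add_smul_starProjection_add_sub_mem_interior {K : Set E} (hK : Convex ℝ K)
    (hB : closedBall (0 : E) 1 ⊆ K) {U : Submodule ℝ E} [U.HasOrthogonalProjection] {c : E}
    {μ : ℝ} (hμ : 1 < μ) (hUc : ∀ u ∈ U, ‖u‖ ≤ μ → u + c ∈ K) {x : E} (hx : ‖x‖ ≤ 1)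
    (hcx : ⟪c, x⟫_ℝ ≤ 0) {t : ℝ} (ht : t ∈ Ioo (0 : ℝ) 1) :
    x + t • (U.starProjection x + c - x) ∈ interior K := by
  by_cases hxU : x ∈ U
  · rw [U.starProjection_eq_self_iff.mpr hxU, add_sub_cancel_left]
    exact hK.add_smul_mem_interior_of_mem_submodule hB hμ hUc hxU hx ht
  have hPx : ‖U.starProjection x‖ < ‖x‖ :=
    (U.norm_starProjection_apply_le x).lt_of_ne (mt (U.mem_iff_norm_starProjection x).mpr hxU)
  refine hK.add_smul_sub_mem_interior_of_inner_lt_one hB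
    (hUc _ (U.starProjection_apply_mem x) (by linarith)) hx ?_ ht
  calc ⟪x, U.starProjection x + c⟫_ℝ
      = ⟪x, U.starProjection x⟫_ℝ + ⟪c, x⟫_ℝ := by rw [inner_add_right, real_inner_comm c]
    _ ≤ ‖x‖ * ‖U.starProjection x‖ := by linarith [real_inner_le_norm x (U.starProjection x)]
    _ < 1 := by linarith [mul_le_of_le_one_left (norm_nonneg (U.starProjection x)) hx]

namespace Submodule

variable (U : Submodule ℝ E) [U.HasOrthogonalProjection] (c : E)

noncomputable def orthogonalStretch (a : ℝ) (x : E) : E :=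
  U.starProjection x + a • (Uᗮ.starProjection x - c) + c

lemma orthogonalStretch_eq_add_smul (a : ℝ) (x : E) :
    U.orthogonalStretch c a x = x + (1 - a) • (U.starProjection x + c - x) := by
  rw [orthogonalStretch, starProjection_orthogonal_val]
  module

variable {U c}

lemma starProjection_orthogonalStretch (hc : c ∈ Uᗮ) (a : ℝ) (x : E) :
    U.starProjection (U.orthogonalStretch c a x) = U.starProjection x := by
  rw [orthogonalStretch_eq_add_smul, map_add, map_smul, map_sub, map_add,
    U.starProjection_apply_eq_zero_iff.mpr hc,
    U.starProjection_eq_self_iff.mpr (U.starProjection_apply_mem x)]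
  simp

lemma orthogonalStretch_orthogonalStretch (hc : c ∈ Uᗮ) (a b : ℝ) (x : E) :
    U.orthogonalStretch c a (U.orthogonalStretch c b x) = U.orthogonalStretch c (a * b) x := by
  rw [orthogonalStretch_eq_add_smul _ _ a, starProjection_orthogonalStretch hc,
    orthogonalStretch_eq_add_smul, orthogonalStretch_eq_add_smul]
  module

lemma orthogonalStretch_one (x : E) : U.orthogonalStretch c 1 x = x := by
  simp [orthogonalStretch_eq_add_smul]

noncomputable def orthogonalStretchHomeomorph (hc : c ∈ Uᗮ) {a : ℝ} (ha : a ≠ 0) : E ≃ₜ E where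
  toFun := U.orthogonalStretch c a
  invFun := U.orthogonalStretch c a⁻¹
  left_inv x := by
    rw [orthogonalStretch_orthogonalStretch hc, inv_mul_cancel₀ ha, orthogonalStretch_one]
  right_inv x := by
    rw [orthogonalStretch_orthogonalStretch hc, mul_inv_cancel₀ ha, orthogonalStretch_one]
  continuous_toFun := by unfold orthogonalStretch; fun_prop
  continuous_invFun := by unfold orthogonalStretch; fun_prop

end Submodule

lemma add_mem_convexHull_image_smul_add {U : Submodule ℝ E} {c u : E} {μ : ℝ} (hμ : 0 < μ)
    (hu : u ∈ U) (hu_norm : ‖u‖ ≤ μ) (s : Set E) :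
    u + c ∈ convexHull ℝ (((fun y => μ • y + c) '' (closedBall 0 1 ∩ U)) ∪ s) := by
  refine subset_convexHull ℝ _ (Or.inl ⟨μ⁻¹ • u, ⟨?_, U.smul_mem _ hu⟩, ?_⟩)
  · rw [mem_closedBall_zero_iff, norm_smul, Real.norm_of_nonneg (inv_pos.mpr hμ).le]
    exact inv_mul_le_one_of_le₀ hu_norm hμ.le
  · simp [smul_smul, mul_inv_cancel₀ hμ.ne']

/-- the stretching lemma (Lemma on the affine map `A`): the unit
ball stays inside the stretched hull, and common boundary points have positive
inner product with `c`. -/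
theorem stmt17 (n : ℕ)
    (U : Submodule ℝ (EuclideanSpace ℝ (Fin n)))
    (c : EuclideanSpace ℝ (Fin n)) (hc : c ∈ Uᗮ)
    (α μ : ℝ) (hα : 1 < α) (hμ : 1 < μ)
    (A : EuclideanSpace ℝ (Fin n) → EuclideanSpace ℝ (Fin n))
    (hA : ∀ x, A x = (U.orthogonalProjectionOnto x : EuclideanSpace ℝ (Fin n))
      + α • (((Uᗮ).orthogonalProjectionOnto x : EuclideanSpace ℝ (Fin n)) - c) + c)
    (C : Set (EuclideanSpace ℝ (Fin n)))
    (hC : C = A '' (convexHull ℝ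
      (((fun y => μ • y + c) '' (Metric.closedBall 0 1 ∩ (U : Set (EuclideanSpace ℝ (Fin n)))))
        ∪ Metric.closedBall 0 1))) :
    Metric.closedBall 0 1 ⊆ C ∧
    ∀ x ∈ Metric.closedBall (0 : EuclideanSpace ℝ (Fin n)) 1,
      x ∈ frontier C → 0 < ⟪c, x⟫_ℝ := by
  let e := U.orthogonalStretchHomeomorph hc (by positivity : α ≠ 0)
  have hAe : A = e := funext fun x => hA x
  have he_symm (x) : e.symm x = x + (1 - α⁻¹) • (U.starProjection x + c - x) :=
    U.orthogonalStretch_eq_add_smul c _ x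
  have ht : 1 - α⁻¹ ∈ Ioo (0 : ℝ) 1 :=
    ⟨sub_pos.mpr (inv_lt_one_of_one_lt₀ hα), sub_lt_self _ (by positivity)⟩
  set K := convexHull ℝ (((fun y => μ • y + c) '' (closedBall 0 1 ∩ (U : Set _)))
    ∪ closedBall 0 1)
  have hK : Convex ℝ K := convex_convexHull ℝ _
  have hB : closedBall 0 1 ⊆ K := subset_union_right.trans (subset_convexHull ℝ _)
  have hUc : ∀ u ∈ U, ‖u‖ ≤ μ → u + c ∈ K := fun u hu hu_norm =>
    add_mem_convexHull_image_smul_add (by positivity) hu hu_norm _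
  subst hC hAe
  refine ⟨fun x hx => ⟨e.symm x, ?_, e.apply_symm_apply x⟩, fun x hx hfr => ?_⟩
  · rw [he_symm]
    refine hK.add_smul_sub_mem (hB hx) (hUc _ (U.starProjection_apply_mem x) ?_)
      ⟨ht.1.le, ht.2.le⟩
    exact (U.norm_starProjection_apply_le x).trans ((mem_closedBall_zero_iff.mp hx).trans hμ.le)
  · by_contra! hcx
    refine hfr.2 (e.image_interior K ▸ ⟨e.symm x, ?_, e.apply_symm_apply x⟩)
    rw [he_symm]
    exact hK.add_smul_starProjection_add_sub_mem_interior hB hμ hUc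
      (mem_closedBall_zero_iff.mp hx) hcx ht
end
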